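/- arXiv:2205.06147 — 8 statements merged into one kernel-verified Lean document; each statement's English description precedes it below -/
import Mathlib

section
/- For any nonzero polynomial f over a field F, the dimension of the kernel of f(J_{0,m}) equals min(m, k(f)), where k(f) is the largest power of t dividing f. -/
/-- The nilpotent Jordan block of size `m`. -/
def jordanBlock (F : Type*) [Field F] (m : ℕ) : Matrix (Fin m) (Fin m) F :=
  Matrix.of fun i j => if (j : ℕ) = (i : ℕ) + 1 then 1 else 0

section aux
variable {F : Type*} [Field F] {m : ℕ}

lemma jordanBlock_pow_apply (k : ℕ) (i j : Fin m) :
    ((jordanBlock F m) ^ k) i j = if (j : ℕ) = (i : ℕ) + k then 1 else 0 := by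
  induction k generalizing i j with
  | zero => simp [Matrix.one_apply, Fin.ext_iff, eq_comm]
  | succ k ih =>
    rw [pow_succ, Matrix.mul_apply]
    by_cases h : (i : ℕ) + k < m
    · rw [Finset.sum_eq_single (⟨(i : ℕ) + k, h⟩ : Fin m)]
      · rw [ih, if_pos rfl, one_mul]
        simp [jordanBlock, add_assoc]
      · intro b _ hb
        rw [ih, if_neg (fun hb' => hb (Fin.ext hb')), zero_mul]
      · simp
    · rw [if_neg (by omega)]
      apply Finset.sum_eq_zero
      intro b _
      rw [ih, if_neg (by omega), zero_mul]

lemma jordanBlock_pow_mulVec (k : ℕ) (v : Fin m → F) (i : Fin m) :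
    ((jordanBlock F m) ^ k).mulVec v i =
      if h : (i : ℕ) + k < m then v ⟨(i : ℕ) + k, h⟩ else 0 := by
  simp only [Matrix.mulVec, dotProduct]
  by_cases h : (i : ℕ) + k < m
  · rw [dif_pos h, Finset.sum_eq_single (⟨(i : ℕ) + k, h⟩ : Fin m)]
    · rw [jordanBlock_pow_apply, if_pos rfl, one_mul]
    · intro b _ hb
      rw [jordanBlock_pow_apply, if_neg (fun hb' => hb (Fin.ext hb')), zero_mul]
    · simp
  · rw [dif_neg h]
    apply Finset.sum_eq_zero
    intro b _
    rw [jordanBlock_pow_apply, if_neg (by omega), zero_mul]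

lemma jordanBlock_pow_card : (jordanBlock F m) ^ m = 0 := by
  ext i j
  rw [jordanBlock_pow_apply, if_neg (by omega)]
  rfl

lemma jordanBlock_isNilpotent : IsNilpotent (jordanBlock F m) :=
  ⟨m, jordanBlock_pow_card⟩

lemma finrank_ker_pow (k : ℕ) :
    Module.finrank F (LinearMap.ker (Matrix.toLin' ((jordanBlock F m) ^ k))) = min m k := by
  by_cases hk : k ≤ m
  · have hker : LinearMap.ker (Matrix.toLin' ((jordanBlock F m) ^ k)) =
        LinearMap.ker (LinearMap.funLeft F F
          (Subtype.val : {j : Fin m // k ≤ (j : ℕ)} → Fin m)) := by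
      ext v
      simp only [LinearMap.mem_ker, Matrix.toLin'_apply]
      constructor
      · intro hv
        funext s
        obtain ⟨j, hj⟩ := s
        have hval : ((jordanBlock F m) ^ k).mulVec v ⟨(j : ℕ) - k, by omega⟩ = 0 := by
          rw [hv]; rfl
        rw [jordanBlock_pow_mulVec, dif_pos (show (j:ℕ) - k + k < m by omega)] at hval
        simp only [LinearMap.funLeft_apply, Pi.zero_apply]
        convert hval using 2
        exact Fin.ext (by simp; omega)
      · intro hv
        funext i
        rw [Pi.zero_apply, jordanBlock_pow_mulVec]
        split
        · rename_i h
          have := congrFun hv ⟨⟨(i : ℕ) + k, h⟩, by exact Nat.le_add_left k i⟩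
          simpa using this
        · rfl
    rw [hker]
    have hsurj : Function.Surjective (LinearMap.funLeft F F
        (Subtype.val : {j : Fin m // k ≤ (j : ℕ)} → Fin m)) :=
      LinearMap.funLeft_surjective_of_injective F F _ Subtype.val_injective
    have hrn := LinearMap.finrank_range_add_finrank_ker (LinearMap.funLeft F F
        (Subtype.val : {j : Fin m // k ≤ (j : ℕ)} → Fin m))
    rw [LinearMap.range_eq_top.2 hsurj, finrank_top] at hrn
    have e : {j : Fin m // k ≤ (j : ℕ)} ≃ Fin (m - k) :=
      { toFun := fun j => ⟨(j.1 : ℕ) - k, by have := j.1.2; have := j.2; omega⟩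
        invFun := fun i => ⟨⟨(i : ℕ) + k, by have := i.2; omega⟩, Nat.le_add_left k i⟩
        left_inv := fun j => by
          obtain ⟨⟨jv, hjv⟩, hkj⟩ := j
          exact Subtype.ext (Fin.ext (by simp at hkj ⊢; omega))
        right_inv := fun i => Fin.ext (by simp) }
    have hcard : Fintype.card {j : Fin m // k ≤ (j : ℕ)} = m - k := by
      rw [Fintype.card_congr e, Fintype.card_fin]
    rw [Module.finrank_fintype_fun_eq_card, Module.finrank_fintype_fun_eq_card,
      hcard, Fintype.card_fin] at hrn
    omega
  · have h0 : (jordanBlock F m) ^ k = 0 := by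
      calc (jordanBlock F m) ^ k
          = (jordanBlock F m) ^ m * (jordanBlock F m) ^ (k - m) := by
            rw [← pow_add]; congr 1; omega
        _ = 0 := by rw [jordanBlock_pow_card, zero_mul]
    rw [h0, map_zero, LinearMap.ker_zero]
    rw [finrank_top, Module.finrank_fintype_fun_eq_card, Fintype.card_fin,
      min_eq_left (by omega)]

end aux

/-- For a nonzero polynomial `f`, `dim Ker f(J_{0,m}) = min(m, k(f))` where
`k(f)` is the largest power of `t` dividing `f` (the root multiplicity of `0`). -/
theorem stmt1 (F : Type*) [Field F] (m : ℕ) (hm : 0 < m)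
    (f : Polynomial F) (hf : f ≠ 0) :
    Module.finrank F
        (LinearMap.ker (Matrix.toLin' (Polynomial.aeval (jordanBlock F m) f))) =
      min m (f.rootMultiplicity 0) := by
  set J := jordanBlock F m with hJ
  set k := f.rootMultiplicity 0 with hk
  set g := f /ₘ (Polynomial.X - Polynomial.C 0) ^ k with hg
  have hfg : (Polynomial.X - Polynomial.C 0) ^ k * g = f :=
    Polynomial.pow_mul_divByMonic_rootMultiplicity_eq f 0
  have hg0 : g.eval 0 ≠ 0 :=
    Polynomial.eval_divByMonic_pow_rootMultiplicity_ne_zero 0 hf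
  have haeval : Polynomial.aeval J f = J ^ k * Polynomial.aeval J g := by
    rw [← hfg, map_mul, map_pow]
    simp
  have key : ∀ p q : Polynomial F,
      Polynomial.aeval J p * Polynomial.aeval J q =
        Polynomial.aeval J q * Polynomial.aeval J p := fun p q => by
    rw [← map_mul, ← map_mul, mul_comm]
  have hcomm : ∀ p : Polynomial F, Commute J (Polynomial.aeval J p) := fun p => by
    have := key Polynomial.X p
    exact (by simpa using this : J * Polynomial.aeval J p = Polynomial.aeval J p * J)
  -- g(J) is a unit
  have hunit : IsUnit (Polynomial.aeval J g) := by
    obtain ⟨h, hh⟩ := Polynomial.X_dvd_sub_C (p := g)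
    have hgsplit : g = Polynomial.C (g.coeff 0) + Polynomial.X * h := by
      rw [← hh]; ring
    have heq : Polynomial.aeval J g =
        algebraMap F (Matrix (Fin m) (Fin m) F) (g.coeff 0) +
          J * Polynomial.aeval J h := by
      conv_lhs => rw [hgsplit]
      simp
    rw [heq]
    have hnil : IsNilpotent (J * Polynomial.aeval J h) := by
      exact Commute.isNilpotent_mul_right (hcomm h) jordanBlock_isNilpotent
    have hu : IsUnit (algebraMap F (Matrix (Fin m) (Fin m) F) (g.coeff 0)) := by
      apply IsUnit.map
      rw [isUnit_iff_ne_zero, Polynomial.coeff_zero_eq_eval_zero]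
      exact hg0
    exact hnil.isUnit_add_left_of_commute hu (Algebra.commutes _ _).symm
  have comm : J ^ k * Polynomial.aeval J g = Polynomial.aeval J g * J ^ k := by
    have := key (Polynomial.X ^ k) g
    simpa using this
  have hinj : LinearMap.ker (Matrix.toLin' (Polynomial.aeval J g)) = ⊥ := by
    have hu2 : IsUnit (Matrix.toLin' (Polynomial.aeval J g)) := by
      have := hunit.map (Matrix.toLinAlgEquiv' :
        Matrix (Fin m) (Fin m) F ≃ₐ[F] ((Fin m → F) →ₗ[F] (Fin m → F)))
      convert this using 1
      exact LinearMap.ext fun v => by rw [Matrix.toLinAlgEquiv'_apply, Matrix.toLin'_apply]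
    rw [LinearMap.ker_eq_bot]
    exact ((Module.End.isUnit_iff _).1 hu2).injective
  rw [haeval, comm, Matrix.toLin'_mul, LinearMap.ker_comp, hinj, Submodule.comap_bot]
  exact finrank_ker_pow k
end

section
/- If f is a nonzero polynomial over F with 0 < k := k(f) ≤ m, and q = ⌊m/k⌋, r = m − kq, then the matrix f(J_{0,m}) is nilpotent and its Jordan form contains exactly k Jordan blocks, of which r blocks have size q+1 and k−r blocks have size q. -/
section Aux
variable {F : Type*} [Field F] {m : ℕ}

lemma jordanBlock_pow (s : ℕ) :
    jordanBlock F m ^ s = Matrix.of fun i j : Fin m => if (j : ℕ) = (i : ℕ) + s then 1 else 0 := by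
  induction s with
  | zero =>
    ext i j
    simp [Matrix.one_apply, Fin.ext_iff, eq_comm]
  | succ s ih =>
    ext i j
    rw [pow_succ, ih]
    simp only [Matrix.mul_apply, jordanBlock, Matrix.of_apply]
    rcases eq_or_ne (j : ℕ) ((i : ℕ) + (s + 1)) with h | h
    · have hl : (i : ℕ) + s < m := by have := j.isLt; omega
      rw [Finset.sum_eq_single (⟨(i : ℕ) + s, hl⟩ : Fin m)]
      · have h1 : (j : ℕ) = ((i : ℕ) + s) + 1 := by omega
        simp [h1]
        omega
      · intro l _ hl'
        have : (l : ℕ) ≠ (i : ℕ) + s := by simpa [Fin.ext_iff] using hl'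
        simp [this]
      · simp
    · rw [if_neg h]
      apply Finset.sum_eq_zero
      intro l _
      rcases eq_or_ne ((l : ℕ)) ((i : ℕ) + s) with h1 | h1
      · rw [if_pos h1, one_mul, if_neg (by omega)]
      · rw [if_neg h1, zero_mul]

lemma aeval_jordanBlock (f : Polynomial F) :
    Polynomial.aeval (jordanBlock F m) f =
      Matrix.of fun i j : Fin m => if (i : ℕ) ≤ (j : ℕ) then f.coeff ((j : ℕ) - (i : ℕ)) else 0 := by
  rw [Polynomial.aeval_eq_sum_range]
  ext i j
  simp only [Matrix.sum_apply, Matrix.smul_apply, jordanBlock_pow, Matrix.of_apply, smul_eq_mul,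
    mul_ite, mul_one, mul_zero]
  rcases le_or_gt (i : ℕ) (j : ℕ) with hij | hij
  · rw [if_pos hij]
    rcases le_or_gt ((j : ℕ) - (i : ℕ)) f.natDegree with hd | hd
    · rw [Finset.sum_eq_single ((j : ℕ) - (i : ℕ))]
      · rw [if_pos (by omega)]
      · intro s _ hs
        rw [if_neg (by omega)]
      · intro h
        exact absurd (Finset.mem_range.2 (by omega)) h
    · rw [Polynomial.coeff_eq_zero_of_natDegree_lt hd]
      apply Finset.sum_eq_zero
      intro s hs
      rw [Finset.mem_range] at hs
      rw [if_neg (by omega)]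
  · rw [if_neg (by omega)]
    apply Finset.sum_eq_zero
    intro s _
    rw [if_neg (by omega)]

lemma aeval_pow_entry (f : Polynomial F) (k : ℕ) (hk0 : 0 < k)
    (hcz : ∀ i, i < k → f.coeff i = 0) (p : ℕ) (a b : Fin m) :
    ((b : ℕ) < (a : ℕ) + p * k → ((Polynomial.aeval (jordanBlock F m) f) ^ p) a b = 0) ∧
    ((b : ℕ) = (a : ℕ) + p * k → ((Polynomial.aeval (jordanBlock F m) f) ^ p) a b = f.coeff k ^ p) := by
  induction p generalizing a b with
  | zero =>
    constructor
    · intro h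
      rw [pow_zero, Matrix.one_apply_ne (by simp [Fin.ext_iff]; omega)]
    · intro h
      have : b = a := Fin.ext (by omega)
      subst this
      rw [pow_zero, Matrix.one_apply_eq, pow_zero]
  | succ p ih =>
    constructor
    · intro hb
      have hpk : (p + 1) * k = p * k + k := by ring
      rw [pow_succ, Matrix.mul_apply]
      apply Finset.sum_eq_zero
      intro l _
      rcases lt_or_ge (l : ℕ) ((a : ℕ) + p * k) with hl | hl
      · rw [(ih a l).1 hl, zero_mul]
      · rw [aeval_jordanBlock]
        simp only [Matrix.of_apply]
        rcases le_or_gt (l : ℕ) (b : ℕ) with h2 | h2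
        · rw [if_pos h2, hcz _ (by omega), mul_zero]
        · rw [if_neg (by omega), mul_zero]
    · intro hb
      have hpk : (p + 1) * k = p * k + k := by ring
      rw [pow_succ, Matrix.mul_apply]
      have hl0 : (a : ℕ) + p * k < m := by have := b.isLt; omega
      rw [Finset.sum_eq_single (⟨(a : ℕ) + p * k, hl0⟩ : Fin m)]
      · rw [(ih a _).2 rfl, aeval_jordanBlock]
        simp only [Matrix.of_apply]
        rw [if_pos (by show (a:ℕ) + p * k ≤ (b:ℕ); omega)]
        have hbk : (b : ℕ) - ((a : ℕ) + p * k) = k := by omega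
        rw [show ((b : ℕ) - ((⟨(a : ℕ) + p * k, hl0⟩ : Fin m) : ℕ)) = k from hbk, pow_succ]
      · intro l _ hl'
        rcases lt_or_ge (l : ℕ) ((a : ℕ) + p * k) with hl | hl
        · rw [(ih a l).1 hl, zero_mul]
        · have hl2 : (a : ℕ) + p * k < (l : ℕ) := by
            rcases Nat.lt_or_ge ((a:ℕ) + p*k) (l:ℕ) with h | h
            · exact h
            · exact absurd (Fin.ext (by omega : (l:ℕ) = (a:ℕ)+p*k)) hl'
          rw [aeval_jordanBlock]
          simp only [Matrix.of_apply]
          rcases le_or_gt (l : ℕ) (b : ℕ) with h2 | h2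
          · rw [if_pos h2, hcz _ (by omega), mul_zero]
          · rw [if_neg (by omega), mul_zero]
      · intro h
        exact absurd (Finset.mem_univ _) h

end Aux

/-- If `0 < k := k(f) ≤ m`, `q = ⌊m/k⌋`, `r = m - kq`, then `f(J_{0,m})` is nilpotent
and its Jordan form consists of exactly `k` blocks: `r` of size `q+1` and `k - r`
of size `q` (expressed as similarity to the corresponding block-diagonal Jordan matrix). -/
theorem stmt2 (F : Type*) [Field F] (m : ℕ) (hm : 0 < m)
    (f : Polynomial F) (hf : f ≠ 0) (k q r : ℕ)
    (hk : k = f.rootMultiplicity 0) (hk0 : 0 < k) (hkm : k ≤ m)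
    (hq : q = m / k) (hr : r = m - k * q) :
    IsNilpotent (Polynomial.aeval (jordanBlock F m) f) ∧
    ∃ (e : ((i : Fin k) × Fin (if (i : ℕ) < r then q + 1 else q)) ≃ Fin m)
      (g : (Matrix (Fin m) (Fin m) F)ˣ),
      Polynomial.aeval (jordanBlock F m) f =
        (g : Matrix (Fin m) (Fin m) F) * (Matrix.reindex e e (Matrix.blockDiagonal'
          (fun i => jordanBlock F (if (i : ℕ) < r then q + 1 else q)))) * ((g⁻¹ : (Matrix (Fin m) (Fin m) F)ˣ) : Matrix (Fin m) (Fin m) F) := by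
  have hcz : ∀ i, i < k → f.coeff i = 0 := by
    intro i hi
    apply Polynomial.coeff_eq_zero_of_lt_natTrailingDegree
    rwa [← Polynomial.rootMultiplicity_eq_natTrailingDegree', ← hk]
  have hc : f.coeff k ≠ 0 := by
    rw [hk, Polynomial.rootMultiplicity_eq_natTrailingDegree']
    exact Polynomial.coeff_natTrailingDegree_ne_zero.2 hf
  have hq1 : 1 ≤ q := hq ▸ (Nat.one_le_div_iff hk0).2 hkm
  have hmod : m % k < k := Nat.mod_lt m hk0
  have hdiv' : m % k + k * q = m := by rw [hq]; exact Nat.mod_add_div m k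
  have hm' : m = k * q + r := by omega
  have hrk : r < k := by omega
  set A := Polynomial.aeval (jordanBlock F m) f with hA
  have hexact : ∀ (i : Fin k) (s : ℕ), s + 1 ≤ (if (i : ℕ) < r then q + 1 else q) →
      s * k ≤ m - 1 - (i : ℕ) := by
    intro i s hs
    have hik := i.isLt
    by_cases hir : (i : ℕ) < r
    · rw [if_pos hir] at hs
      have h1 : s * k ≤ q * k := Nat.mul_le_mul_right k (by omega)
      have h2 : q * k = k * q := Nat.mul_comm q k
      omega
    · rw [if_neg hir] at hs
      have h1 : s * k ≤ (q - 1) * k := Nat.mul_le_mul_right k (by omega)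
      have h2 : (q - 1) * k + k = q * k := by
        have h3 : q - 1 + 1 = q := by omega
        calc (q - 1) * k + k = (q - 1 + 1) * k := by ring
        _ = q * k := by rw [h3]
      have h4 : q * k = k * q := Nat.mul_comm q k
      omega
  have hvan : ∀ i : Fin k, m - 1 - (i : ℕ) < (if (i : ℕ) < r then q + 1 else q) * k := by
    intro i
    have hik := i.isLt
    by_cases hir : (i : ℕ) < r
    · rw [if_pos hir]
      have h1 : (q + 1) * k = k * q + k := by ring
      omega
    · rw [if_neg hir]
      have h1 : q * k = k * q := Nat.mul_comm q k
      omega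
  have hφlt : ∀ σ : (i : Fin k) × Fin (if (i : ℕ) < r then q + 1 else q),
      m - 1 - (σ.1 : ℕ) - ((if (σ.1 : ℕ) < r then q + 1 else q) - 1 - (σ.2 : ℕ)) * k < m := by
    intro σ; omega
  let φ : ((i : Fin k) × Fin (if (i : ℕ) < r then q + 1 else q)) → Fin m :=
    fun σ => ⟨m - 1 - (σ.1 : ℕ) - ((if (σ.1 : ℕ) < r then q + 1 else q) - 1 - (σ.2 : ℕ)) * k, hφlt σ⟩
  have hφinj : Function.Injective φ := by
    rintro ⟨i, p⟩ ⟨i', p'⟩ hφe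
    have hp := p.isLt
    have hp' := p'.isLt
    have e1 := hexact i ((if (i : ℕ) < r then q + 1 else q) - 1 - (p : ℕ)) (by omega)
    have e1' := hexact i' ((if (i' : ℕ) < r then q + 1 else q) - 1 - (p' : ℕ)) (by omega)
    have hik := i.isLt; have hik' := i'.isLt
    have hval : m - 1 - (i : ℕ) - ((if (i : ℕ) < r then q + 1 else q) - 1 - (p : ℕ)) * k
        = m - 1 - (i' : ℕ) - ((if (i' : ℕ) < r then q + 1 else q) - 1 - (p' : ℕ)) * k :=
      congrArg Fin.val hφe
    have hsum : (i : ℕ) + ((if (i : ℕ) < r then q + 1 else q) - 1 - (p : ℕ)) * k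
        = (i' : ℕ) + ((if (i' : ℕ) < r then q + 1 else q) - 1 - (p' : ℕ)) * k := by omega
    have hmod2 : (i : ℕ) = (i' : ℕ) := by
      have h5 := congrArg (· % k) hsum
      simpa [Nat.add_mul_mod_self_right, Nat.mod_eq_of_lt hik, Nat.mod_eq_of_lt hik'] using h5
    have hii : i = i' := Fin.ext hmod2
    subst hii
    have hs2 : ((if (i : ℕ) < r then q + 1 else q) - 1 - (p : ℕ)) * k
        = ((if (i : ℕ) < r then q + 1 else q) - 1 - (p' : ℕ)) * k := by omega
    have hss := Nat.eq_of_mul_eq_mul_right hk0 hs2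
    have hpp : p = p' := Fin.ext (by omega)
    rw [hpp]
  have hcard : Fintype.card ((i : Fin k) × Fin (if (i : ℕ) < r then q + 1 else q)) = m := by
    rw [Fintype.card_sigma]
    simp only [Fintype.card_fin]
    rw [Fin.sum_univ_eq_sum_range (fun i => if i < r then q + 1 else q) k]
    have h1 : ∑ i ∈ Finset.range k, (if i < r then q + 1 else q)
        = ∑ i ∈ Finset.range k, q + ∑ i ∈ Finset.range k, (if i < r then 1 else 0) := by
      rw [← Finset.sum_add_distrib]
      exact Finset.sum_congr rfl fun i _ => by split <;> omega
    rw [h1, Finset.sum_const, Finset.card_range, smul_eq_mul]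
    have h2 : ∑ i ∈ Finset.range k, (if i < r then (1 : ℕ) else 0) = r := by
      rw [← Finset.sum_filter]
      rw [show (Finset.range k).filter (fun i => i < r) = Finset.range r from by
        ext x; simp only [Finset.mem_filter, Finset.mem_range]; omega]
      simp
    rw [h2]
    omega
  let e : ((i : Fin k) × Fin (if (i : ℕ) < r then q + 1 else q)) ≃ Fin m :=
    Equiv.ofBijective φ ((Fintype.bijective_iff_injective_and_card φ).2
      ⟨hφinj, by rw [hcard, Fintype.card_fin]⟩)
  let col : ((i : Fin k) × Fin (if (i : ℕ) < r then q + 1 else q)) → Fin m → F :=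
    fun σ a => (A ^ ((if (σ.1 : ℕ) < r then q + 1 else q) - 1 - (σ.2 : ℕ))) a
      ⟨m - 1 - (σ.1 : ℕ), by omega⟩
  let G : Matrix (Fin m) (Fin m) F := Matrix.of fun a b => col (e.symm b) a
  have hGe : ∀ (a : Fin m) (σ), G a (e σ) = col σ a := by
    intro a σ
    show col (e.symm (e σ)) a = col σ a
    rw [Equiv.symm_apply_apply]
  have hkey : ∀ σ : (i : Fin k) × Fin (if (i : ℕ) < r then q + 1 else q),
      m - 1 - (σ.1 : ℕ) = ((φ σ : Fin m) : ℕ)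
        + ((if (σ.1 : ℕ) < r then q + 1 else q) - 1 - (σ.2 : ℕ)) * k := by
    rintro ⟨i, p⟩
    have e1 := hexact i ((if (i : ℕ) < r then q + 1 else q) - 1 - (p : ℕ)) (by have := p.isLt; omega)
    show m - 1 - (i : ℕ) = m - 1 - (i : ℕ) - ((if (i : ℕ) < r then q + 1 else q) - 1 - (p : ℕ)) * k
        + ((if (i : ℕ) < r then q + 1 else q) - 1 - (p : ℕ)) * k
    omega
  have hcol0 : ∀ (σ) (a : Fin m), ((φ σ : Fin m) : ℕ) < (a : ℕ) → col σ a = 0 := by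
    intro σ a h
    refine (aeval_pow_entry f k hk0 hcz _ a _).1 ?_
    have h7 : ((φ σ : Fin m) : ℕ) = m - 1 - (σ.1 : ℕ)
        - ((if (σ.1 : ℕ) < r then q + 1 else q) - 1 - (σ.2 : ℕ)) * k := rfl
    have h8 := hkey σ
    simp only [Fin.val_mk]
    omega
  have hcol1 : ∀ (σ) (a : Fin m), (a : ℕ) = ((φ σ : Fin m) : ℕ) →
      col σ a = f.coeff k ^ ((if (σ.1 : ℕ) < r then q + 1 else q) - 1 - (σ.2 : ℕ)) := by
    intro σ a h
    refine (aeval_pow_entry f k hk0 hcz _ a _).2 ?_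
    have h7 : ((φ σ : Fin m) : ℕ) = m - 1 - (σ.1 : ℕ)
        - ((if (σ.1 : ℕ) < r then q + 1 else q) - 1 - (σ.2 : ℕ)) * k := rfl
    have h8 := hkey σ
    simp only [Fin.val_mk]
    omega
  have htri : ∀ a b : Fin m, (b : ℕ) < (a : ℕ) → G a b = 0 := by
    intro a b hab
    obtain ⟨σ, rfl⟩ : ∃ σ, e σ = b := ⟨e.symm b, e.apply_symm_apply b⟩
    rw [hGe]
    exact hcol0 σ a hab
  have hdet : G.det ≠ 0 := by
    rw [Matrix.det_of_upperTriangular (fun i j hij => htri i j hij)]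
    refine Finset.prod_ne_zero_iff.2 fun b _ => ?_
    obtain ⟨σ, rfl⟩ : ∃ σ, e σ = b := ⟨e.symm b, e.apply_symm_apply b⟩
    rw [hGe, hcol1 σ (e σ) rfl]
    exact pow_ne_zero _ hc
  have hu : IsUnit G := (Matrix.isUnit_iff_isUnit_det G).2 (isUnit_iff_ne_zero.2 hdet)
  obtain ⟨g, hg⟩ := hu
  let B : Matrix (Fin m) (Fin m) F := Matrix.reindex e e (Matrix.blockDiagonal'
    (fun i => jordanBlock F (if (i : ℕ) < r then q + 1 else q)))
  have hBe : ∀ (τ σ), B (e τ) (e σ) = Matrix.blockDiagonal'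
      (fun i : Fin k => jordanBlock F (if (i : ℕ) < r then q + 1 else q)) τ σ := by
    intro τ σ
    show (Matrix.reindex e e (Matrix.blockDiagonal'
      (fun i : Fin k => jordanBlock F (if (i : ℕ) < r then q + 1 else q)))) (e τ) (e σ) = _
    rw [Matrix.reindex_apply, Matrix.submatrix_apply, Equiv.symm_apply_apply,
      Equiv.symm_apply_apply]
  have hAG : A * G = G * B := by
    ext a b
    obtain ⟨σ, rfl⟩ : ∃ σ, e σ = b := ⟨e.symm b, e.apply_symm_apply b⟩
    obtain ⟨i, p⟩ := σ
    have hlen1 : 1 ≤ (if (i : ℕ) < r then q + 1 else q) := by split <;> omega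
    have hp := p.isLt
    have hL : (A * G) a (e ⟨i, p⟩)
        = (A ^ (((if (i : ℕ) < r then q + 1 else q) - 1 - (p : ℕ)) + 1)) a
            ⟨m - 1 - (i : ℕ), by omega⟩ := by
      rw [pow_succ', Matrix.mul_apply, Matrix.mul_apply]
      refine Finset.sum_congr rfl fun l _ => ?_
      rw [hGe l ⟨i, p⟩]
    rw [hL]
    by_cases hp0 : (p : ℕ) = 0
    · have hexp : ((if (i : ℕ) < r then q + 1 else q) - 1 - (p : ℕ)) + 1
          = (if (i : ℕ) < r then q + 1 else q) := by omega
      rw [hexp]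
      rw [(aeval_pow_entry f k hk0 hcz _ a _).1 (by
        have h9 := hvan i
        simp only [Fin.val_mk]
        omega)]
      rw [Matrix.mul_apply]
      symm
      refine Finset.sum_eq_zero fun c _ => ?_
      obtain ⟨τ, rfl⟩ : ∃ τ, e τ = c := ⟨e.symm c, e.apply_symm_apply c⟩
      obtain ⟨j, u⟩ := τ
      by_cases hji : j = i
      · subst hji
        rw [hBe, Matrix.blockDiagonal'_apply_eq]
        show G a (e ⟨j, u⟩) * (if ((p : ℕ)) = (u : ℕ) + 1 then _ else _) = 0
        rw [if_neg (by omega), mul_zero]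
      · rw [hBe, Matrix.blockDiagonal'_apply_ne _ _ _ hji, mul_zero]
    · have hp1lt : (p : ℕ) - 1 < (if (i : ℕ) < r then q + 1 else q) := by omega
      rw [Matrix.mul_apply]
      rw [Finset.sum_eq_single (e ⟨i, ⟨(p : ℕ) - 1, hp1lt⟩⟩)]
      · rw [hBe, Matrix.blockDiagonal'_apply_eq, hGe]
        have hp0' : 1 ≤ (p : ℕ) := Nat.one_le_iff_ne_zero.2 hp0
        have hexp2 : ((if (i : ℕ) < r then q + 1 else q) - 1 - (p : ℕ)) + 1
            = (if (i : ℕ) < r then q + 1 else q) - 1 - ((p : ℕ) - 1) := by omega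
        rw [hexp2]
        show (A ^ ((if (i : ℕ) < r then q + 1 else q) - 1 - ((p : ℕ) - 1))) a
              ⟨m - 1 - (i : ℕ), by omega⟩
          = (A ^ ((if (i : ℕ) < r then q + 1 else q) - 1 - ((p : ℕ) - 1))) a
              ⟨m - 1 - (i : ℕ), by omega⟩
            * (if ((p : ℕ)) = ((p : ℕ) - 1) + 1 then (1 : F) else 0)
        rw [if_pos (show (p : ℕ) = (p : ℕ) - 1 + 1 by omega), mul_one]
      · intro c _ hc0
        obtain ⟨τ, rfl⟩ : ∃ τ, e τ = c := ⟨e.symm c, e.apply_symm_apply c⟩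
        obtain ⟨j, u⟩ := τ
        by_cases hji : j = i
        · subst hji
          rw [hBe, Matrix.blockDiagonal'_apply_eq]
          show G a (e ⟨j, u⟩) * (if ((p : ℕ)) = (u : ℕ) + 1 then (1:F) else 0) = 0
          have hune : (u : ℕ) ≠ (p : ℕ) - 1 := fun hEq =>
            hc0 (congrArg e (congrArg (Sigma.mk j) (Fin.ext hEq :
              u = ⟨(p : ℕ) - 1, hp1lt⟩)))
          have hp0' : 1 ≤ (p : ℕ) := Nat.one_le_iff_ne_zero.2 hp0
          rw [if_neg (by omega), mul_zero]
        · rw [hBe, Matrix.blockDiagonal'_apply_ne _ _ _ hji, mul_zero]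
      · intro hnotmem
        exact absurd (Finset.mem_univ _) hnotmem
  refine ⟨⟨m, ?_⟩, e, g, ?_⟩
  · ext a b
    exact (aeval_pow_entry f k hk0 hcz m a b).1
      (by have := b.isLt; have h2 := Nat.le_mul_of_pos_right m hk0; omega)
  · calc A = A * ((g : Matrix (Fin m) (Fin m) F) * ((g⁻¹ : (Matrix (Fin m) (Fin m) F)ˣ) : Matrix (Fin m) (Fin m) F)) := by
          rw [Units.mul_inv, mul_one]
    _ = (A * G) * ((g⁻¹ : (Matrix (Fin m) (Fin m) F)ˣ) : Matrix (Fin m) (Fin m) F) := by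
          rw [← mul_assoc, hg]
    _ = (G * B) * ((g⁻¹ : (Matrix (Fin m) (Fin m) F)ˣ) : Matrix (Fin m) (Fin m) F) := by
          rw [hAG]
    _ = (g : Matrix (Fin m) (Fin m) F) * B * ((g⁻¹ : (Matrix (Fin m) (Fin m) F)ˣ) : Matrix (Fin m) (Fin m) F) := by
          rw [hg]
end

section
/- Let V be a finite-dimensional vector space, X and Y commuting nilpotent endomorphisms of V, and W, U subspaces with V = W ⊕ U, XW ⊆ W, XU ⊆ U, and YW ⊆ U. Assume every Jordan block of X restricted to W has size strictly greater than k+1, where k is the nilpotency index of X restricted to U. Then for all integers p, q ≥ 0 with p + q > dim U, one has Y^q X^p U = 0. -/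
namespace Stmt5Aux

open Module Submodule

variable {F : Type*} [Field F] {V : Type*} [AddCommGroup V] [Module F V]

def evW (c b : V →ₗ[F] V) : List Bool → (V →ₗ[F] V)
  | [] => LinearMap.id
  | (x :: L) => (evW c b L).comp (if x then b else c)

def wtW : List Bool → ℕ
  | [] => 0
  | (x :: L) => (if x then 2 else 1) + wtW L

lemma evW_append_single (c b : V →ₗ[F] V) (L : List Bool) (x : Bool) :
    evW c b (L ++ [x]) = (if x then b else c).comp (evW c b L) := by
  induction L with
  | nil => simp [evW]
  | cons y L ih =>
    show evW c b (L ++ [x]) ∘ₗ _ = _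
    rw [ih, LinearMap.comp_assoc]
    rfl

lemma wtW_append_single (L : List Bool) (x : Bool) :
    wtW (L ++ [x]) = wtW L + (if x then 2 else 1) := by
  induction L with
  | nil => simp [wtW]
  | cons y L ih => simp [wtW, ih]; omega

lemma stab [FiniteDimensional F V] (g : V →ₗ[F] V) (P P' : Submodule F V)
    (hle : P' ≤ P) (hgP : Submodule.map g P ≤ P) (hgP' : Submodule.map g P' ≤ P')
    (m : ℕ) (hm : Submodule.map (g ^ m) P ≤ P') :
    Submodule.map (g ^ (finrank F P - finrank F P')) P ≤ P' := by
  set T : ℕ → Submodule F V := fun i => P' ⊔ Submodule.map (g ^ i) P with hT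
  have hmapsucc : ∀ i, Submodule.map (g ^ (i + 1)) P ≤ Submodule.map (g ^ i) P := by
    intro i
    rw [pow_succ, Module.End.mul_eq_comp, Submodule.map_comp]
    exact Submodule.map_mono hgP
  have hmono : ∀ i, T (i + 1) ≤ T i := fun i => sup_le_sup_left (hmapsucc i) P'
  have hanti : Antitone T := antitone_nat_of_succ_le hmono
  have hT0 : T 0 = P := by
    simp only [hT, pow_zero, Module.End.one_eq_id, Submodule.map_id]
    exact sup_eq_right.mpr hle
  have hTm : T m ≤ P' := sup_le le_rfl hm
  have hgT : ∀ i, Submodule.map g (T i) ≤ T (i + 1) := by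
    intro i
    rw [hT]
    simp only [Submodule.map_sup]
    apply sup_le_sup hgP'
    rw [← Submodule.map_comp, ← Module.End.mul_eq_comp, ← pow_succ']
  have hprop : ∀ i, T (i + 1) = T i → T (i + 2) = T (i + 1) := by
    intro i h
    refine le_antisymm (hmono _) ?_
    refine sup_le le_sup_left ?_
    have h1 : Submodule.map (g ^ (i + 1)) P = Submodule.map g (Submodule.map (g ^ i) P) := by
      rw [← Submodule.map_comp, ← Module.End.mul_eq_comp, ← pow_succ']
    rw [h1]
    calc Submodule.map g (Submodule.map (g ^ i) P) ≤ Submodule.map g (T i) :=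
          Submodule.map_mono le_sup_right
      _ = Submodule.map g (T (i + 1)) := by rw [h]
      _ ≤ T (i + 2) := hgT (i + 1)
  have hstab : ∀ i, T (i + 1) = T i → ∀ j, T (i + j) = T i := by
    intro i h j
    induction j with
    | zero => rfl
    | succ j ih =>
      have hsucc : ∀ j, T (i + j + 1) = T (i + j) := by
        intro j
        induction j with
        | zero => exact h
        | succ j ih2 =>
          have := hprop (i + j) ih2
          convert this using 2 <;> omega
      rw [show i + (j + 1) = (i + j) + 1 by omega, hsucc j, ih]
  have key : ∀ i, T i ≤ P' ∨ finrank F (T i) + i ≤ finrank F P := by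
    intro i
    induction i with
    | zero => right; rw [hT0]; omega
    | succ i ih =>
      rcases ih with h | h
      · exact Or.inl ((hmono i).trans h)
      · by_cases heq : T (i + 1) = T i
        · left
          have h1 : T (i + m) = T i := hstab i heq m
          have h2 : T (i + m) ≤ T m := hanti (Nat.le_add_left m i)
          exact (hmono i).trans (h1 ▸ (h2.trans hTm))
        · have hlt : T (i + 1) < T i := lt_of_le_of_ne (hmono i) heq
          have := Submodule.finrank_lt_finrank_of_lt hlt
          right; omega
  rcases key (finrank F P - finrank F P') with h | h
  · exact le_trans le_sup_right h
  · have h1 : finrank F P' ≤ finrank F (T (finrank F P - finrank F P')) :=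
      Submodule.finrank_mono le_sup_left
    have h2 : finrank F P' ≤ finrank F P := Submodule.finrank_mono hle
    have h3 : finrank F (T (finrank F P - finrank F P')) ≤ finrank F P' := by omega
    have h4 : P' = T (finrank F P - finrank F P') :=
      Submodule.eq_of_le_of_finrank_le le_sup_left h3
    exact le_trans le_sup_right (le_of_eq h4.symm)


lemma mainC1 [FiniteDimensional F V]
    (c b : V →ₗ[F] V) (𝓕 : ℕ → Submodule F V)
    (hmono : ∀ a, 𝓕 (a + 1) ≤ 𝓕 a)
    (hstrict : ∀ a, 𝓕 a ≠ ⊥ → finrank F (𝓕 (a + 1)) < finrank F (𝓕 a))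
    (hcF : ∀ a, ∀ u ∈ 𝓕 a, c u ∈ 𝓕 a)
    (hbulk : ∀ a, ∀ u ∈ 𝓕 a,
      (c ^ (finrank F (𝓕 a) - finrank F (𝓕 (a + 1)))) u ∈ 𝓕 (a + 1))
    (hbF : ∀ a, ∀ u ∈ 𝓕 a, b u ∈ 𝓕 (a + 2)) :
    ∀ (t : ℕ) (L : List Bool), L.length ≤ t → ∀ (s a : ℕ) (u : V), u ∈ 𝓕 a →
      finrank F (𝓕 a) ≤ s + wtW L → evW c b L ((c ^ s) u) = 0 := by
  intro t
  induction t using Nat.strong_induction_on with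
  | _ t IHt =>
  intro L hL s
  induction s using Nat.strong_induction_on with
  | _ s IHs =>
  intro a u hu hth
  by_cases h0 : 𝓕 a = ⊥
  · have hu0 : u = 0 := by simpa [h0] using hu
    simp [hu0]
  · have hfr0 : finrank F (𝓕 a) ≠ 0 := fun h => h0 (Submodule.finrank_eq_zero.mp h)
    have hlt : finrank F (𝓕 (a + 1)) < finrank F (𝓕 a) := hstrict a h0
    by_cases hs : finrank F (𝓕 a) - finrank F (𝓕 (a + 1)) ≤ s
    · -- peel a bulk of `na` c's, dropping to level `a+1`
      have hrw : (c ^ s) u = (c ^ (s - (finrank F (𝓕 a) - finrank F (𝓕 (a + 1))))) ((c ^ (finrank F (𝓕 a) - finrank F (𝓕 (a + 1)))) u) := by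
        rw [← Module.End.mul_apply, ← pow_add]
        congr 2
        omega
      rw [hrw]
      exact IHs (s - (finrank F (𝓕 a) - finrank F (𝓕 (a + 1)))) (by omega) (a + 1) _ (hbulk a u hu) (by omega)
    · cases L with
      | nil =>
        exfalso
        norm_num [wtW] at hth
        omega
      | cons x L' =>
        have hL' : L'.length < t := by
          simp only [List.length_cons] at hL
          omega
        cases x with
        | false =>
          have hpeel : evW c b (false :: L') ((c ^ s) u) = evW c b L' ((c ^ (s + 1)) u) := by
            show evW c b L' ((if false then b else c) ((c ^ s) u)) = _
            rw [if_neg (by simp), pow_succ', Module.End.mul_apply]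
          rw [hpeel]
          refine IHt L'.length hL' L' le_rfl (s + 1) a u hu ?_
          norm_num [wtW] at hth ⊢
          omega
        | true =>
          have hu1 : (c ^ s) u ∈ 𝓕 a :=
            Module.End.pow_apply_mem_of_forall_mem s (hcF a) u hu
          have hu2 : b ((c ^ s) u) ∈ 𝓕 (a + 2) := hbF a _ hu1
          have hpeel : evW c b (true :: L') ((c ^ s) u) = evW c b L' (b ((c ^ s) u)) := rfl
          rw [hpeel]
          by_cases h1 : 𝓕 (a + 1) = ⊥
          · have hz : b ((c ^ s) u) = 0 := by
              have := hmono (a + 1) hu2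
              simpa [h1] using this
            rw [hz]
            exact map_zero _
          · have hlt2 : finrank F (𝓕 (a + 2)) < finrank F (𝓕 (a + 1)) := hstrict (a + 1) h1
            have := IHt L'.length hL' L' le_rfl 0 (a + 2) _ hu2 (by
              norm_num [wtW] at hth ⊢
              omega)
            simpa using this


end Stmt5Aux

/-- Lemma 2.4: commuting nilpotent operators `X`, `Y`, with `V = W ⊕ U`, `W`, `U`
`X`-invariant, `YW ⊆ U`, and all Jordan blocks of `X|_W` of size `> k + 1`
where `k = h(X|_U)` is the nilpotency index of `X` on `U` (the Jordan-block condition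
is expressed via kernel dimensions: the number of blocks of `X|_W` of size `≥ k + 2`
equals the total number of blocks `dim Ker(X|_W)`). Then `Y^q X^p U = 0`
whenever `p + q > dim U`. -/
theorem stmt5 (F : Type*) [Field F] (V : Type*) [AddCommGroup V] [Module F V]
    [FiniteDimensional F V]
    (X Y : V →ₗ[F] V) (hXnil : IsNilpotent X) (hYnil : IsNilpotent Y)
    (hc : Commute X Y)
    (W U : Submodule F V) (hcompl : IsCompl W U)
    (hXW : ∀ x ∈ W, X x ∈ W) (hXU : ∀ x ∈ U, X x ∈ U) (hYW : ∀ x ∈ W, Y x ∈ U)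
    (k : ℕ) (hk1 : 1 ≤ k) (hk2 : ∀ x ∈ U, (X ^ k) x = 0)
    (hk3 : k = 1 ∨ ∃ x ∈ U, (X ^ (k - 1)) x ≠ 0)
    (hblocks : Module.finrank F (LinearMap.ker ((X.restrict hXW) ^ (k + 2)))
      = Module.finrank F (LinearMap.ker ((X.restrict hXW) ^ (k + 1)))
        + Module.finrank F (LinearMap.ker (X.restrict hXW)))
    (p q : ℕ) (hpq : p + q > Module.finrank F U) :
    ∀ x ∈ U, (Y ^ q) ((X ^ p) x) = 0 := by
  classical
  open Stmt5Aux in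
  -- projections
  set πm : V →ₗ[F] V := U.subtype ∘ₗ (U.linearProjOfIsCompl W hcompl.symm) with hπm
  set σm : V →ₗ[F] V := LinearMap.id - πm with hσm
  have hπU : ∀ v ∈ U, πm v = v := by
    intro v hv
    show (U.subtype) (U.linearProjOfIsCompl W hcompl.symm v) = v
    exact congrArg Subtype.val (Submodule.projectionOnto_apply_left hcompl.symm ⟨v, hv⟩)
  have hπW : ∀ v ∈ W, πm v = 0 := by
    intro v hv
    show (U.subtype) (U.linearProjOfIsCompl W hcompl.symm v) = 0
    exact congrArg Subtype.val (Submodule.projectionOnto_apply_of_mem_right hcompl.symm hv)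
  have hπmem : ∀ v, πm v ∈ U := fun v => Subtype.coe_prop _
  have hdecomp : ∀ v : V, ∃ w ∈ W, ∃ u ∈ U, v = w + u := by
    intro v
    have : v ∈ W ⊔ U := by rw [hcompl.sup_eq_top]; trivial
    rcases Submodule.mem_sup.mp this with ⟨w, hw, u, hu, h⟩
    exact ⟨w, hw, u, hu, h.symm⟩
  have hσW : ∀ v, σm v ∈ W := by
    intro v
    rcases hdecomp v with ⟨w, hw, u, hu, rfl⟩
    have : σm (w + u) = w := by
      simp only [hσm, LinearMap.sub_apply, LinearMap.id_apply, map_add]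
      rw [hπW w hw, hπU u hu]
      abel
    rw [this]; exact hw
  have hσU : ∀ v ∈ U, σm v = 0 := by
    intro v hv
    simp only [hσm, LinearMap.sub_apply, LinearMap.id_apply, hπU v hv, sub_self]
  have hsplit : ∀ v : V, σm v + πm v = v := by
    intro v
    simp only [hσm, LinearMap.sub_apply, LinearMap.id_apply]
    abel
  have hπX : ∀ v, πm (X v) = X (πm v) := by
    intro v
    rcases hdecomp v with ⟨w, hw, u, hu, rfl⟩
    have h1 : πm (w + u) = u := by rw [map_add, hπW w hw, hπU u hu, zero_add]
    rw [h1, map_add, map_add, hπW _ (hXW w hw), hπU _ (hXU u hu), zero_add]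
  have hπXa : ∀ (a : ℕ) (v), πm ((X ^ a) v) = (X ^ a) (πm v) := by
    intro a
    induction a with
    | zero => intro v; simp
    | succ a ih =>
      intro v
      rw [pow_succ', Module.End.mul_apply, Module.End.mul_apply, hπX, ih]
  have hσX : ∀ (a : ℕ) (v), σm ((X ^ a) v) = (X ^ a) (σm v) := by
    intro a v
    simp only [hσm, LinearMap.sub_apply, LinearMap.id_apply, map_sub, hπXa]
  have hYXa : ∀ (a : ℕ) (v), Y ((X ^ a) v) = (X ^ a) (Y v) := by
    intro a v
    have h := (hc.pow_left a).eq
    calc Y ((X ^ a) v) = (Y * X ^ a) v := rfl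
      _ = (X ^ a * Y) v := by rw [h]
      _ = (X ^ a) (Y v) := rfl
  -- the filtration
  set Fa : ℕ → Submodule F V := fun a => Submodule.map (X ^ a) U with hFa
  have hFa0 : Fa 0 = U := by
    simp only [hFa, pow_zero, Module.End.one_eq_id, Submodule.map_id]
  have hFasucc : ∀ a, Fa (a + 1) = Submodule.map X (Fa a) := by
    intro a
    simp only [hFa]
    rw [pow_succ', Module.End.mul_eq_comp, Submodule.map_comp]
  have hFam : ∀ (a : ℕ) (u), u ∈ U → (X ^ a) u ∈ Fa a := by
    intro a u hu
    exact ⟨u, hu, rfl⟩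
  have hFle : ∀ a, Fa (a + 1) ≤ Fa a := by
    intro a
    induction a with
    | zero =>
      rw [hFasucc, hFa0]
      rintro _ ⟨u, hu, rfl⟩
      exact hXU u hu
    | succ a ih =>
      rw [hFasucc (a + 1)]
      exact le_trans (Submodule.map_mono ih) (le_of_eq (hFasucc a).symm)
  have hFanti : ∀ {a b : ℕ}, a ≤ b → Fa b ≤ Fa a := fun h =>
    antitone_nat_of_succ_le hFle h
  have hFaU : ∀ a, Fa a ≤ U := fun a => le_trans (hFanti (Nat.zero_le a)) (le_of_eq hFa0)
  have hFak : Fa k = ⊥ := by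
    rw [eq_bot_iff]
    rintro _ ⟨u, hu, rfl⟩
    rw [Submodule.mem_bot]
    exact hk2 u hu
  have hFstrict : ∀ a, Fa a ≠ ⊥ → Module.finrank F (Fa (a + 1)) < Module.finrank F (Fa a) := by
    intro a hbot
    have hne : Fa (a + 1) ≠ Fa a := by
      intro heq
      have hconst : ∀ j, Fa (a + j) = Fa a := by
        intro j
        induction j with
        | zero => rfl
        | succ j ih =>
          rw [show a + (j + 1) = (a + j) + 1 by omega, hFasucc, ih, ← hFasucc, heq]
      have h1 : Fa (a + k) = Fa a := hconst k
      have h2 : Fa (a + k) ≤ Fa k := hFanti (Nat.le_add_left k a)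
      rw [hFak] at h2
      exact hbot (le_antisymm (h1 ▸ h2) bot_le)
    exact Submodule.finrank_lt_finrank_of_lt (lt_of_le_of_ne (hFle a) hne)
  -- the operators
  set Cop : V →ₗ[F] V := πm ∘ₗ Y with hCop
  set Bop : V →ₗ[F] V := Y ∘ₗ (σm ∘ₗ Y) with hBop
  have hCF : ∀ a, ∀ u ∈ Fa a, Cop u ∈ Fa a := by
    rintro a _ ⟨u0, hu0, rfl⟩
    show πm (Y ((X ^ a) u0)) ∈ Fa a
    rw [hYXa, hπXa]
    exact hFam a _ (hπmem _)
  -- key kernel lemma from the Jordan block condition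
  have hker : ∀ w ∈ W, (X ^ k) w = 0 → ∃ w' ∈ W, w = X (X w') := by
    set NN : W →ₗ[F] W := X.restrict hXW with hNN
    have hrk : ∀ (j : ℕ) (x : W), (((NN ^ j) x : W) : V) = (X ^ j) (x : V) := by
      intro j x
      rw [hNN, Module.End.pow_restrict]
      rfl
    have hkerle : LinearMap.ker NN ≤ LinearMap.ker (NN ^ (k + 2)) := by
      intro x hx
      rw [LinearMap.mem_ker] at hx ⊢
      rw [pow_succ, Module.End.mul_apply, hx, map_zero]
    set K : Submodule F W := LinearMap.ker (NN ^ (k + 2)) with hK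
    set f : K →ₗ[F] W := NN ∘ₗ K.subtype with hf
    have hrange : LinearMap.range f = Submodule.map NN K := by
      rw [hf, LinearMap.range_comp, Submodule.range_subtype]
    have hkerf : LinearMap.ker f = Submodule.comap K.subtype (LinearMap.ker NN) :=
      LinearMap.ker_comp _ _
    have hfr : Module.finrank F (LinearMap.ker f) = Module.finrank F (LinearMap.ker NN) := by
      rw [hkerf]
      exact LinearEquiv.finrank_eq (Submodule.comapSubtypeEquivOfLe hkerle)
    have hrn : Module.finrank F (LinearMap.range f) + Module.finrank F (LinearMap.ker f)
        = Module.finrank F K := LinearMap.finrank_range_add_finrank_ker f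
    have hle2 : Submodule.map NN K ≤ LinearMap.ker (NN ^ (k + 1)) := by
      rintro _ ⟨x, hx, rfl⟩
      rw [LinearMap.mem_ker, ← Module.End.mul_apply, ← pow_succ]
      exact hx
    have heq1 : Submodule.map NN K = LinearMap.ker (NN ^ (k + 1)) := by
      refine Submodule.eq_of_le_of_finrank_le hle2 ?_
      rw [← hrange]
      omega
    intro w hw hwk
    have hmem1 : (⟨w, hw⟩ : W) ∈ LinearMap.ker (NN ^ (k + 1)) := by
      rw [LinearMap.mem_ker]
      apply Subtype.ext
      rw [hrk]
      show (X ^ (k + 1)) w = (0 : V)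
      rw [pow_succ', Module.End.mul_apply, hwk, map_zero]
    rw [← heq1] at hmem1
    obtain ⟨z, hz, hz2⟩ := hmem1
    have hz3 : z ∈ LinearMap.ker (NN ^ (k + 1)) := by
      rw [LinearMap.mem_ker, pow_succ, Module.End.mul_apply, hz2]
      apply Subtype.ext
      rw [hrk]
      exact hwk
    rw [← heq1] at hz3
    obtain ⟨z', hz', hz'2⟩ := hz3
    refine ⟨(z' : V), z'.2, ?_⟩
    have e1 : (NN z : V) = X (z : V) := rfl
    have e2 : (NN z' : V) = X (z' : V) := rfl
    have e3 : ((NN z : W) : V) = w := congrArg Subtype.val hz2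
    have e4 : ((NN z' : W) : V) = (z : V) := congrArg Subtype.val hz'2
    rw [e1] at e3
    rw [e2] at e4
    rw [← e3, ← e4]
  have hBF : ∀ a, ∀ u ∈ Fa a, Bop u ∈ Fa (a + 2) := by
    rintro a _ ⟨u0, hu0, rfl⟩
    show Y (σm (Y ((X ^ a) u0))) ∈ Fa (a + 2)
    rw [hYXa, hσX, hYXa]
    -- now the element is (X ^ a) (Y (σm (Y u0)))
    have hw : σm (Y u0) ∈ W := hσW _
    have hXkw : (X ^ k) (σm (Y u0)) = 0 := by
      rw [← hσX, ← hYXa, hk2 u0 hu0, map_zero, map_zero]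
    obtain ⟨w', hw', hww⟩ := hker _ hw hXkw
    have hY1 : ∀ v, Y (X v) = X (Y v) := fun v => by
      have := hYXa 1 v
      simpa [pow_one] using this
    have : Y (σm (Y u0)) = (X ^ 2) (Y w') := by
      rw [hww, hY1, hY1]
      rw [show ((X ^ 2) (Y w')) = X (X (Y w')) from by
        rw [pow_two, Module.End.mul_apply]]
    rw [this]
    have : (X ^ a) ((X ^ 2) (Y w')) = (X ^ (a + 2)) (Y w') := by
      rw [← Module.End.mul_apply, ← pow_add]
    rw [this]
    exact hFam _ _ (hYW w' hw')

  -- dynamics identities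
  have hYpow : ∀ (t : ℕ) (v : V), (Y ^ (t + 1)) v = Y ((Y ^ t) v) := by
    intro t v; rw [pow_succ', Module.End.mul_apply]
  have hσYid : ∀ v : V, σm (Y v) = σm (Y (πm v)) := by
    intro v
    conv_lhs => rw [← hsplit v]
    rw [map_add, map_add]
    have h1 : Y (σm v) ∈ U := hYW _ (hσW v)
    rw [hσU _ h1, zero_add]
  have hσid : ∀ (t : ℕ) (v : V), σm ((Y ^ (t + 1)) v) = σm (Y (πm ((Y ^ t) v))) := by
    intro t v; rw [hYpow]; exact hσYid _
  have hid : ∀ (t : ℕ) (v : V),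
      πm ((Y ^ (t + 2)) v) = Cop (πm ((Y ^ (t + 1)) v)) + Bop (πm ((Y ^ t) v)) := by
    intro t v
    rw [hYpow (t + 1) v]
    conv_lhs => rw [← hsplit ((Y ^ (t + 1)) v)]
    rw [map_add, map_add]
    have hYσ : Y (σm ((Y ^ (t + 1)) v)) ∈ U := hYW _ (hσW _)
    rw [hπU _ hYσ, hσid t v]
    exact add_comm _ _
  -- comparison between powers of Cop and iterates of Y
  have hdiff : ∀ (a t : ℕ), ∀ u ∈ Fa a,
      πm ((Y ^ t) u) ∈ Fa a ∧ πm ((Y ^ t) u) - (Cop ^ t) u ∈ Fa (a + 2) := by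
    intro a
    have main : ∀ t : ℕ,
        (∀ u ∈ Fa a, πm ((Y ^ t) u) ∈ Fa a ∧ πm ((Y ^ t) u) - (Cop ^ t) u ∈ Fa (a + 2)) ∧
        (∀ u ∈ Fa a, πm ((Y ^ (t + 1)) u) ∈ Fa a ∧
          πm ((Y ^ (t + 1)) u) - (Cop ^ (t + 1)) u ∈ Fa (a + 2)) := by
      intro t
      induction t with
      | zero =>
        constructor
        · intro u hu
          have h1 : πm ((Y ^ 0) u) = u := by
            simp only [pow_zero, Module.End.one_apply]
            exact hπU u (hFaU a hu)
          constructor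
          · rw [h1]; exact hu
          · rw [h1]; simp
        · intro u hu
          have h1 : πm ((Y ^ 1) u) = Cop u := by rw [pow_one]; rfl
          constructor
          · rw [h1]; exact hCF a u hu
          · rw [h1, pow_one]; simp
      | succ t ih =>
        refine ⟨ih.2, ?_⟩
        intro u hu
        obtain ⟨h0mem, h0d⟩ := ih.1 u hu
        obtain ⟨h1mem, h1d⟩ := ih.2 u hu
        constructor
        · rw [hid t u]
          exact Submodule.add_mem _ (hCF a _ h1mem) (hFanti (by omega) (hBF a _ h0mem))
        · rw [hid t u]
          have hrw : Cop (πm ((Y ^ (t + 1)) u)) + Bop (πm ((Y ^ t) u)) - (Cop ^ (t + 2)) u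
              = Cop (πm ((Y ^ (t + 1)) u) - (Cop ^ (t + 1)) u) + Bop (πm ((Y ^ t) u)) := by
            rw [map_sub, show (Cop ^ (t + 2)) u = Cop ((Cop ^ (t + 1)) u) from by
              rw [pow_succ', Module.End.mul_apply]]
            abel
          rw [hrw]
          exact Submodule.add_mem _ (hCF (a + 2) _ h1d) (hBF a _ h0mem)
    exact fun t => (main t).1
  obtain ⟨m, hYm⟩ := hYnil
  have hbulkm : ∀ a, Submodule.map (Cop ^ m) (Fa a) ≤ Fa (a + 1) := by
    rintro a _ ⟨u, hu, rfl⟩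
    have hd := (hdiff a m u hu).2
    rw [hYm] at hd
    simp only [LinearMap.zero_apply, map_zero, zero_sub] at hd
    have h1 : (Cop ^ m) u ∈ Fa (a + 2) := by simpa using Submodule.neg_mem _ hd
    exact hFanti (by omega) h1
  have hCmap : ∀ a, Submodule.map Cop (Fa a) ≤ Fa a := by
    rintro a _ ⟨u, hu, rfl⟩
    exact hCF a u hu
  have hbulk : ∀ a, ∀ u ∈ Fa a,
      (Cop ^ (Module.finrank F (Fa a) - Module.finrank F (Fa (a + 1)))) u ∈ Fa (a + 1) := by
    intro a u hu
    exact Stmt5Aux.stab Cop (Fa a) (Fa (a + 1)) (hFle a) (hCmap a) (hCmap (a + 1)) m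
      (hbulkm a) ⟨u, hu, rfl⟩
  have C1 := Stmt5Aux.mainC1 Cop Bop Fa hFle hFstrict hCF hbulk hBF
  -- the reachable submodules
  set E : ℕ → Submodule F V := fun t =>
    ⨆ (L : List Bool) (_ : t ≤ Stmt5Aux.wtW L),
      Submodule.map (Stmt5Aux.evW Cop Bop L) (Fa p) with hE
  have hmemE : ∀ (t : ℕ) (L : List Bool), t ≤ Stmt5Aux.wtW L →
      Submodule.map (Stmt5Aux.evW Cop Bop L) (Fa p) ≤ E t := by
    intro t L h
    exact le_iSup₂ (f := fun (L : List Bool) (_ : t ≤ Stmt5Aux.wtW L) =>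
      Submodule.map (Stmt5Aux.evW Cop Bop L) (Fa p)) L h
  have hE0 : ∀ v ∈ Fa p, v ∈ E 0 := by
    intro v hv
    exact hmemE 0 [] (by simp [Stmt5Aux.wtW]) ⟨v, hv, rfl⟩
  have hCE : ∀ t, ∀ z ∈ E t, Cop z ∈ E (t + 1) := by
    intro t z hz
    have hle : Submodule.map Cop (E t) ≤ E (t + 1) := by
      have heq : Submodule.map Cop (E t) = ⨆ (L : List Bool) (_ : t ≤ Stmt5Aux.wtW L),
          Submodule.map Cop (Submodule.map (Stmt5Aux.evW Cop Bop L) (Fa p)) := by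
        show Submodule.map Cop (⨆ (L : List Bool) (_ : t ≤ Stmt5Aux.wtW L),
          Submodule.map (Stmt5Aux.evW Cop Bop L) (Fa p)) = _
        simp only [Submodule.map_iSup]
      rw [heq]
      apply iSup₂_le
      intro L h
      have h1 : Submodule.map Cop (Submodule.map (Stmt5Aux.evW Cop Bop L) (Fa p))
          = Submodule.map (Stmt5Aux.evW Cop Bop (L ++ [false])) (Fa p) := by
        rw [← Submodule.map_comp]
        congr 1
        rw [Stmt5Aux.evW_append_single]
        norm_num
      exact le_trans (le_of_eq h1) (hmemE (t + 1) (L ++ [false])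
        (by rw [Stmt5Aux.wtW_append_single]; norm_num; omega))
    exact hle ⟨z, hz, rfl⟩
  have hBE : ∀ t, ∀ z ∈ E t, Bop z ∈ E (t + 2) := by
    intro t z hz
    have hle : Submodule.map Bop (E t) ≤ E (t + 2) := by
      have heq : Submodule.map Bop (E t) = ⨆ (L : List Bool) (_ : t ≤ Stmt5Aux.wtW L),
          Submodule.map Bop (Submodule.map (Stmt5Aux.evW Cop Bop L) (Fa p)) := by
        show Submodule.map Bop (⨆ (L : List Bool) (_ : t ≤ Stmt5Aux.wtW L),
          Submodule.map (Stmt5Aux.evW Cop Bop L) (Fa p)) = _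
        simp only [Submodule.map_iSup]
      rw [heq]
      apply iSup₂_le
      intro L h
      have h1 : Submodule.map Bop (Submodule.map (Stmt5Aux.evW Cop Bop L) (Fa p))
          = Submodule.map (Stmt5Aux.evW Cop Bop (L ++ [true])) (Fa p) := by
        rw [← Submodule.map_comp]
        congr 1
        rw [Stmt5Aux.evW_append_single]
        norm_num
      exact le_trans (le_of_eq h1) (hmemE (t + 2) (L ++ [true])
        (by rw [Stmt5Aux.wtW_append_single]; norm_num; omega))
    exact hle ⟨z, hz, rfl⟩
  have HH : ∀ (t : ℕ), ∀ v ∈ Fa p, πm ((Y ^ t) v) ∈ E t := by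
    have main : ∀ t, (∀ v ∈ Fa p, πm ((Y ^ t) v) ∈ E t) ∧
        (∀ v ∈ Fa p, πm ((Y ^ (t + 1)) v) ∈ E (t + 1)) := by
      intro t
      induction t with
      | zero =>
        constructor
        · intro v hv
          have h1 : πm ((Y ^ 0) v) = v := by
            simp only [pow_zero, Module.End.one_apply]
            exact hπU v (hFaU p hv)
          rw [h1]
          exact hE0 v hv
        · intro v hv
          have h1 : πm ((Y ^ 1) v) = Cop v := by rw [pow_one]; rfl
          rw [h1]
          exact hCE 0 v (hE0 v hv)
      | succ t ih =>
        refine ⟨ih.2, ?_⟩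
        intro v hv
        rw [hid t v]
        exact Submodule.add_mem _ (hCE (t + 1) _ (ih.2 v hv)) (hBE t _ (ih.1 v hv))
    exact fun t => (main t).1
  have hEbot : ∀ t, Module.finrank F (Fa p) ≤ t → E t = ⊥ := by
    intro t ht
    refine le_bot_iff.mp ?_
    apply iSup₂_le
    intro L hwt
    rintro _ ⟨u, hu, rfl⟩
    rw [Submodule.mem_bot]
    have := C1 L.length L le_rfl 0 p u hu (by omega)
    simpa using this
  have hNP : ∀ a, Module.finrank F (Fa a) + a ≤ Module.finrank F (Fa 0) ∨ Fa a = ⊥ := by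
    intro a
    induction a with
    | zero => left; omega
    | succ a ih =>
      rcases ih with h | h
      · by_cases hbot : Fa a = ⊥
        · right
          rw [hFasucc, hbot]
          simp
        · left
          have := hFstrict a hbot
          omega
      · right
        rw [hFasucc, h]
        simp
  -- final assembly
  intro x hx
  have hv : (X ^ p) x ∈ Fa p := hFam p x hx
  rcases hNP p with hle | hbot
  · have hn0 : Module.finrank F (Fa 0) = Module.finrank F U := by rw [hFa0]
    have hq : Module.finrank F (Fa p) + 1 ≤ q := by omega
    obtain ⟨t, rfl⟩ : ∃ t, q = t + 1 := ⟨q - 1, by omega⟩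
    have h1 : πm ((Y ^ (t + 1)) ((X ^ p) x)) = 0 := by
      have h := HH (t + 1) _ hv
      rw [hEbot (t + 1) (by omega)] at h
      simpa using h
    have h2 : πm ((Y ^ t) ((X ^ p) x)) = 0 := by
      have h := HH t _ hv
      rw [hEbot t (by omega)] at h
      simpa using h
    have h3 : σm ((Y ^ (t + 1)) ((X ^ p) x)) = 0 := by
      rw [hσid t, h2]
      simp
    calc (Y ^ (t + 1)) ((X ^ p) x)
        = σm ((Y ^ (t + 1)) ((X ^ p) x)) + πm ((Y ^ (t + 1)) ((X ^ p) x)) := (hsplit _).symm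
      _ = 0 := by rw [h1, h3, add_zero]
  · have hz : (X ^ p) x = 0 := by
      rw [hbot] at hv
      simpa using hv
    rw [hz, map_zero]
end

section
/- Under the hypotheses of the previous statement (V = W ⊕ U, X-invariant, YW ⊆ U, all Jordan blocks of X|_W of size > h(X|_U) + 1), every operator Y^q X^p with p ≥ 0, q ≥ 1 and p + q > dim U + 1 is zero on all of V. -/
open Module LinearMap

section Helpers

variable {F : Type*} [Field F] {M : Type*} [AddCommGroup M] [Module F M] [FiniteDimensional F M]

private lemma finrank_map_add_inf_ker (g : M →ₗ[F] M) (S : Submodule F M) :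
    finrank F (S.map g) + finrank F (S ⊓ LinearMap.ker g : Submodule F M) = finrank F S := by
  have h := LinearMap.finrank_range_add_finrank_ker (g.domRestrict S)
  rw [LinearMap.range_domRestrict, LinearMap.ker_domRestrict] at h
  have e : ((LinearMap.ker g).comap S.subtype) ≃ₗ[F]
      (Submodule.map S.subtype ((LinearMap.ker g).comap S.subtype)) :=
    Submodule.equivMapOfInjective _ (Submodule.injective_subtype S) _
  rw [e.finrank_eq, Submodule.map_comap_subtype] at h
  exact h

private lemma ker_pow_le_range_pow (f : M →ₗ[F] M) (k b c : ℕ) (hbc : b + c = k + 2)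
    (hb : finrank F (LinearMap.ker (f ^ (k + 2)))
      = finrank F (LinearMap.ker (f ^ (k + 1))) + finrank F (LinearMap.ker f)) :
    LinearMap.ker (f ^ b) ≤ LinearMap.range (f ^ c) := by
  set κ : ℕ → ℕ := fun j => finrank F (LinearMap.ker (f ^ j)) with hκ
  -- rank-nullity per power
  have hr : ∀ j, finrank F (LinearMap.range (f ^ j)) + κ j = finrank F M := fun j =>
    LinearMap.finrank_range_add_finrank_ker (f ^ j)
  -- range of successive powers
  have hrsucc : ∀ j, LinearMap.range (f ^ (j + 1)) = Submodule.map f (LinearMap.range (f ^ j)) := by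
    intro j
    rw [pow_succ', Module.End.mul_eq_comp, LinearMap.range_comp]
  have hrle : ∀ j, LinearMap.range (f ^ (j + 1)) ≤ LinearMap.range (f ^ j) := by
    intro j x hx
    obtain ⟨y, rfl⟩ := hx
    rw [pow_succ, Module.End.mul_apply]
    exact ⟨f y, rfl⟩
  -- concavity
  have hconc : ∀ j, κ (j + 2) + κ j ≤ κ (j + 1) + κ (j + 1) := by
    intro j
    have e1 := finrank_map_add_inf_ker f (LinearMap.range (f ^ j))
    have e2 := finrank_map_add_inf_ker f (LinearMap.range (f ^ (j + 1)))
    rw [← hrsucc j] at e1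
    rw [← hrsucc (j + 1), show j + 1 + 1 = j + 2 from rfl] at e2
    have hmono : finrank F (LinearMap.range (f ^ (j + 1)) ⊓ LinearMap.ker f : Submodule F M)
        ≤ finrank F (LinearMap.range (f ^ j) ⊓ LinearMap.ker f : Submodule F M) :=
      Submodule.finrank_mono (inf_le_inf_right _ (hrle j))
    have h0 := hr j; have h1 := hr (j + 1); have h2 := hr (j + 2)
    omega
  have hD : ∀ i j, i ≤ j → κ (j + 1) + κ i ≤ κ (i + 1) + κ j := by
    intro i j hij
    induction j, hij using Nat.le_induction with
    | base => omega
    | succ j hij IH =>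
      have h1 := hconc j
      rw [show j + 1 + 1 = j + 2 from rfl]
      omega
  have hκ0 : κ 0 = 0 := by
    simp [hκ, pow_zero, Module.End.one_eq_id, LinearMap.ker_id, finrank_bot]
  have hb' : κ (k + 2) = κ (k + 1) + κ 1 := by
    show _ = _ + finrank F (LinearMap.ker (f ^ 1))
    rw [pow_one]
    exact hb
  have hδ : ∀ j, j ≤ k + 1 → κ (j + 1) = κ j + κ 1 := by
    intro j hj
    have h1 := hD j (k + 1) hj
    have h2 := hD 0 j (Nat.zero_le j)
    rw [show (0:ℕ) + 1 = 1 from rfl] at h2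
    rw [show k + 1 + 1 = k + 2 from rfl] at h1
    omega
  have hlin : ∀ j, j ≤ k + 2 → κ j = j * κ 1 := by
    intro j
    induction j with
    | zero => intro _; simpa using hκ0
    | succ j IH =>
      intro hj
      have h1 := hδ j (by omega)
      have h2 := IH (by omega)
      rw [h1, h2]; ring
  -- key dimension count
  have hmapbc : Submodule.map (f ^ b) (LinearMap.range (f ^ c)) = LinearMap.range (f ^ (k + 2)) := by
    rw [← hbc, pow_add, Module.End.mul_eq_comp, LinearMap.range_comp]
  have e1 := finrank_map_add_inf_ker (f ^ b) (LinearMap.range (f ^ c))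
  rw [hmapbc] at e1
  have hsum : κ (k + 2) = κ b + κ c := by
    rw [hlin b (by omega), hlin c (by omega), hlin (k + 2) le_rfl, ← add_mul, hbc]
  have hrc := hr c
  have hrk2 := hr (k + 2)
  have hdim : κ b ≤ finrank F
      (LinearMap.range (f ^ c) ⊓ LinearMap.ker (f ^ b) : Submodule F M) := by
    omega
  have heq : (LinearMap.range (f ^ c) ⊓ LinearMap.ker (f ^ b) : Submodule F M)
      = LinearMap.ker (f ^ b) :=
    Submodule.eq_of_le_of_finrank_le inf_le_right hdim
  intro x hx
  rw [← heq] at hx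
  exact hx.1

end Helpers


section Key

variable {F : Type*} [Field F] {V : Type*} [AddCommGroup V] [Module F V] [FiniteDimensional F V]

private lemma lemKey (X Y P : V →ₗ[F] V) (U W : Submodule F V) (k N : ℕ)
    (hYN : Y ^ N = 0)
    (hc : Commute X Y)
    (hXU : ∀ u ∈ U, X u ∈ U)
    (hYW : ∀ w ∈ W, Y w ∈ U)
    (hP1 : ∀ v, P v ∈ U)
    (hP2 : ∀ u ∈ U, P u = u)
    (hPX : ∀ v, P (X v) = X (P v))
    (hQW : ∀ v, v - P v ∈ W)
    (hkU : ∀ u ∈ U, (X ^ k) u = 0)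
    (hJ : ∀ a, a < k → ∀ w ∈ W, (X ^ (k - a)) w = 0 → ∃ w' ∈ W, (X ^ (a + 2)) w' = w) :
    ∀ p m, finrank F (Submodule.map (X ^ p) U) + 1 ≤ m →
      ∀ x ∈ Submodule.map (X ^ p) U, (Y ^ m) x = 0 := by
  -- basic commutation facts
  have hcXY : ∀ n m v, (X ^ n) ((Y ^ m) v) = (Y ^ m) ((X ^ n) v) := by
    intro n m v
    exact LinearMap.congr_fun ((hc.pow_pow n m).eq) v
  have hcY : ∀ n v, (X ^ n) (Y v) = Y ((X ^ n) v) := by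
    intro n v
    simpa [pow_one] using hcXY n 1 v
  have hXUpow : ∀ n, ∀ u ∈ U, (X ^ n) u ∈ U := by
    intro n
    induction n with
    | zero => intro u hu; simpa using hu
    | succ n IH =>
      intro u hu
      rw [pow_succ, Module.End.mul_apply]
      exact IH _ (hXU u hu)
  have hPXpow : ∀ n v, P ((X ^ n) v) = (X ^ n) (P v) := by
    intro n
    induction n with
    | zero => intro v; simp
    | succ n IH =>
      intro v
      rw [pow_succ', Module.End.mul_apply, Module.End.mul_apply, hPX, IH]
  have hRU : ∀ a, U.map (X ^ a) ≤ U := by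
    rintro a x ⟨u, hu, rfl⟩
    exact hXUpow a u hu
  have hRmono : ∀ a b : ℕ, a ≤ b → U.map (X ^ b) ≤ U.map (X ^ a) := by
    rintro a b hab x ⟨u, hu, rfl⟩
    refine ⟨(X ^ (b - a)) u, hXUpow _ u hu, ?_⟩
    rw [← Module.End.mul_apply, ← pow_add]
    congr 2
    omega
  have hRbot : ∀ a, k ≤ a → U.map (X ^ a) = ⊥ := by
    intro a ha
    rw [eq_bot_iff]
    refine le_trans (hRmono k a ha) ?_
    rintro x ⟨u, hu, rfl⟩
    simp [hkU u hu]
  have hXkill : ∀ a, a ≤ k → ∀ x ∈ U.map (X ^ a), (X ^ (k - a)) x = 0 := by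
    rintro a ha x ⟨u, hu, rfl⟩
    rw [← Module.End.mul_apply, ← pow_add]
    have : k - a + a = k := by omega
    rw [this]
    exact hkU u hu
  have hPYR : ∀ a, ∀ x ∈ U.map (X ^ a), P (Y x) ∈ U.map (X ^ a) := by
    rintro a x ⟨u, hu, rfl⟩
    rw [← hcY a u, hPXpow]
    exact ⟨P (Y u), hP1 _, rfl⟩
  have hmapsucc : ∀ b : ℕ, U.map (X ^ (b + 1)) = Submodule.map X (U.map (X ^ b)) := by
    intro b
    rw [pow_succ', Module.End.mul_eq_comp, Submodule.map_comp]
  have hstab : ∀ b : ℕ, U.map (X ^ (b + 1)) = U.map (X ^ b) → U.map (X ^ b) = ⊥ := by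
    intro b hEq
    have hall : ∀ j : ℕ, U.map (X ^ (b + j)) = U.map (X ^ b) := by
      intro j
      induction j with
      | zero => rfl
      | succ j IH =>
        have : b + (j + 1) = (b + j) + 1 := by omega
        rw [this, hmapsucc, IH, ← hmapsucc, hEq]
    have := hall k
    rw [← this]
    exact hRbot _ (by omega)
  -- the key step: Y sends the troublesome W-part two levels deeper
  have hKstep : ∀ a, a < k → ∀ w ∈ W, (X ^ (k - a)) w = 0 → Y w ∈ U.map (X ^ (a + 2)) := by
    intro a ha w hw hwk
    obtain ⟨w', hw', rfl⟩ := hJ a ha w hw hwk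
    rw [← hcY]
    exact ⟨Y w', hYW w' hw', rfl⟩
  -- W-part of Y^m of an element of level a is killed by X^(k-a)
  have hQlev : ∀ a, a ≤ k → ∀ m, ∀ x ∈ U.map (X ^ a),
      (X ^ (k - a)) ((Y ^ m) x - P ((Y ^ m) x)) = 0 := by
    intro a ha m x hx
    have h1 : (X ^ (k - a)) ((Y ^ m) x) = 0 := by
      rw [hcXY, hXkill a ha x hx, map_zero]
    rw [map_sub, h1, ← hPXpow, h1, map_zero, sub_zero]
  -- difference between (P∘Y)^m and P∘(Y^m) on level a
  have hdiff : ∀ a, a < k → ∀ m, ∀ x ∈ U.map (X ^ a),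
      ((P ∘ₗ Y) ^ m) x - P ((Y ^ m) x) ∈ U.map (X ^ (a + 2)) ∧
        P ((Y ^ m) x) ∈ U.map (X ^ a) := by
    intro a ha m
    induction m with
    | zero =>
      intro x hx
      have hxU : x ∈ U := hRU a hx
      simp only [pow_zero, Module.End.one_apply, hP2 x hxU, sub_self]
      exact ⟨Submodule.zero_mem _, hx⟩
    | succ m IH =>
      intro x hx
      obtain ⟨hd, hp⟩ := IH x hx
      set ym := (Y ^ m) x with hym
      set pm := P ym with hpm
      set wm := ym - pm with hwm
      have hwmW : wm ∈ W := hQW ym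
      have hwmk : (X ^ (k - a)) wm = 0 := hQlev a (le_of_lt ha) m x hx
      have hYwm : Y wm ∈ U.map (X ^ (a + 2)) := hKstep a ha wm hwmW hwmk
      have hPYwm : P (Y wm) = Y wm := hP2 _ (hRU _ hYwm)
      have hYsucc : (Y ^ (m + 1)) x = Y pm + Y wm := by
        rw [pow_succ', Module.End.mul_apply, ← hym]
        have : ym = pm + wm := by rw [hwm]; abel
        rw [this, map_add]
      have hPsucc : P ((Y ^ (m + 1)) x) = P (Y pm) + Y wm := by
        rw [hYsucc, map_add, hPYwm]
      constructor
      · have hLsucc : ((P ∘ₗ Y) ^ (m + 1)) x = P (Y (((P ∘ₗ Y) ^ m) x)) := by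
          rw [pow_succ', Module.End.mul_apply, LinearMap.comp_apply]
        have hLm : ((P ∘ₗ Y) ^ m) x = (((P ∘ₗ Y) ^ m) x - pm) + pm := by abel
        rw [hLsucc, hLm, map_add, map_add, hPsucc]
        have h1 : P (Y (((P ∘ₗ Y) ^ m) x - pm)) ∈ U.map (X ^ (a + 2)) := hPYR _ _ hd
        have : P (Y (((P ∘ₗ Y) ^ m) x - pm)) + P (Y pm) - (P (Y pm) + Y wm)
            = P (Y (((P ∘ₗ Y) ^ m) x - pm)) - Y wm := by abel
        rw [this]
        exact Submodule.sub_mem _ h1 hYwm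
      · rw [hPsucc]
        exact Submodule.add_mem _ (hPYR a pm hp) (hRmono a (a + 2) (by omega) hYwm)
  -- main double induction
  have main : ∀ (t : ℕ), ∀ j a (T : Submodule F V), k ≤ a + j → T ≤ U.map (X ^ a) →
      U.map (X ^ (a + 1)) ≤ T → (∀ x ∈ T, P (Y x) ∈ T) → finrank F T ≤ t →
      ∀ m, t + 1 ≤ m → ∀ x ∈ T, (Y ^ m) x = 0 := by
    intro t
    induction t using Nat.strong_induction_on with
    | _ t IHt =>
      intro j
      induction j with
      | zero =>
        intro a T hka hT1 _ _ _ m _ x hx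
        have : T = ⊥ := le_bot_iff.mp (le_trans hT1 (le_of_eq (hRbot a (by omega))))
        rw [this] at hx
        simp only [Submodule.mem_bot] at hx
        rw [hx, map_zero]
      | succ j IHj =>
        intro a T hka hT1 hT2 hT3 hft m hm x hx
        by_cases hak : a < k
        · -- main case
          set L : V →ₗ[F] V := P ∘ₗ Y with hL
          set T' : Submodule F V := Submodule.map L T ⊔ U.map (X ^ (a + 1)) with hT'
          have hT'leT : T' ≤ T := by
            rw [hT']
            refine sup_le ?_ hT2
            rintro y ⟨z, hz, rfl⟩
            exact hT3 z hz
          by_cases hTT : T' = T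
          · -- T = U.map (X^(a+1)); move one level up
            have hiter : ∀ i : ℕ, T ≤ Submodule.map (L ^ i) T ⊔ U.map (X ^ (a + 1)) := by
              intro i
              induction i with
              | zero =>
                simp only [pow_zero, Module.End.one_eq_id, Submodule.map_id]
                exact le_sup_left
              | succ i IH =>
                have step1 : T ≤ T' := le_of_eq hTT.symm
                refine le_trans step1 ?_
                rw [hT']
                refine sup_le ?_ le_sup_right
                have : Submodule.map L T ≤ Submodule.map L
                    (Submodule.map (L ^ i) T ⊔ U.map (X ^ (a + 1))) :=
                  Submodule.map_mono IH
                refine le_trans this ?_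
                rw [Submodule.map_sup]
                refine sup_le ?_ ?_
                · rw [← Submodule.map_comp, ← Module.End.mul_eq_comp, ← pow_succ']
                  exact le_sup_left
                · refine le_trans ?_ le_sup_right
                  rintro y ⟨z, hz, rfl⟩
                  exact hPYR (a + 1) z hz
            have hN : Submodule.map (L ^ N) T ≤ U.map (X ^ (a + 1)) := by
              rintro y ⟨z, hz, rfl⟩
              have hd := (hdiff a hak N z (hT1 hz)).1
              rw [hYN] at hd
              simp only [LinearMap.zero_apply, map_zero, sub_zero] at hd
              exact hRmono (a + 1) (a + 2) (by omega) hd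
            have hTle : T ≤ U.map (X ^ (a + 1)) := by
              refine le_trans (hiter N) ?_
              exact sup_le hN le_rfl
            have hTeq : T = U.map (X ^ (a + 1)) := le_antisymm hTle hT2
            refine IHj (a + 1) T (by omega) (le_of_eq hTeq) ?_ hT3 hft m hm x hx
            rw [hTeq]
            exact hRmono _ _ (by omega)
          · -- strict decrease
            have hT'lt : T' < T := lt_of_le_of_ne hT'leT hTT
            have hfr : finrank F T' < finrank F T :=
              Submodule.finrank_lt_finrank_of_lt hT'lt
            have ht1 : 1 ≤ finrank F T := by omega
            have hm2 : 2 ≤ m := by omega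
            obtain ⟨m'', rfl⟩ : ∃ m'', m = m'' + 2 := ⟨m - 2, by omega⟩
            have hstep : ((Y ^ (m'' + 2))) x = (Y ^ (m'' + 1)) (Y x) := by
              rw [pow_succ, Module.End.mul_apply]
            rw [hstep]
            have hyd : Y x = P (Y x) + (Y x - P (Y x)) := by abel
            rw [hyd, map_add]
            have hterm1 : (Y ^ (m'' + 1)) (P (Y x)) = 0 := by
              have hPYx : P (Y x) ∈ T' := by
                rw [hT']
                exact Submodule.mem_sup_left ⟨x, hx, rfl⟩
              refine IHt (t - 1) (by omega) k a T' (by omega)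
                (le_trans hT'leT hT1) le_sup_right ?_ (by omega) (m'' + 1) (by omega) _ hPYx
              intro z hz
              rw [hT']
              exact Submodule.mem_sup_left ⟨z, hT'leT hz, rfl⟩
            have hterm2 : (Y ^ (m'' + 1)) (Y x - P (Y x)) = 0 := by
              have hwW : Y x - P (Y x) ∈ W := hQW (Y x)
              have hwk : (X ^ (k - a)) (Y x - P (Y x)) = 0 := by
                have := hQlev a (le_of_lt hak) 1 x (hT1 hx)
                simpa [pow_one] using this
              have hYw : Y (Y x - P (Y x)) ∈ U.map (X ^ (a + 2)) := hKstep a hak _ hwW hwk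
              rw [pow_succ, Module.End.mul_apply]
              by_cases hbot : U.map (X ^ (a + 2)) = ⊥
              · rw [hbot] at hYw
                simp only [Submodule.mem_bot] at hYw
                rw [hYw, map_zero]
              · have hbot1 : U.map (X ^ (a + 1)) ≠ ⊥ := by
                  intro h
                  apply hbot
                  rw [eq_bot_iff]
                  exact le_trans (hRmono (a + 1) (a + 2) (by omega)) (le_of_eq h)
                have hne : U.map (X ^ (a + 2)) ≠ U.map (X ^ (a + 1)) := by
                  intro h
                  exact hbot1 (hstab (a + 1) h)
                have hlt : U.map (X ^ (a + 2)) < U.map (X ^ (a + 1)) :=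
                  lt_of_le_of_ne (hRmono _ _ (by omega)) hne
                have hfr2 : finrank F (U.map (X ^ (a + 2))) < finrank F (U.map (X ^ (a + 1))) :=
                  Submodule.finrank_lt_finrank_of_lt hlt
                have hfr3 : finrank F (U.map (X ^ (a + 1))) ≤ finrank F T' :=
                  Submodule.finrank_mono le_sup_right
                refine IHt (finrank F (U.map (X ^ (a + 2)))) (by omega) k (a + 2) _ (by omega)
                  le_rfl (hRmono _ _ (by omega)) (hPYR (a + 2)) le_rfl m'' (by omega) _ hYw
            rw [hterm1, hterm2, add_zero]
        · -- a ≥ k : everything is zero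
          have : T = ⊥ := le_bot_iff.mp (le_trans hT1 (le_of_eq (hRbot a (by omega))))
          rw [this] at hx
          simp only [Submodule.mem_bot] at hx
          rw [hx, map_zero]

  intro p m hpm x hx
  exact main (finrank F (Submodule.map (X ^ p) U)) k p _ (by omega) le_rfl
    (hRmono p (p + 1) (by omega)) (hPYR p) le_rfl m hpm x hx

end Key

section Chain

variable {F : Type*} [Field F] {V : Type*} [AddCommGroup V] [Module F V] [FiniteDimensional F V]

private lemma rank_chain (X : V →ₗ[F] V) (U : Submodule F V) (k : ℕ)
    (hXU : ∀ u ∈ U, X u ∈ U) (hkU : ∀ u ∈ U, (X ^ k) u = 0) :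
    ∀ p : ℕ, Submodule.map (X ^ p) U = ⊥ ∨
      finrank F (Submodule.map (X ^ p) U) + p ≤ finrank F U := by
  have hXUpow : ∀ n, ∀ u ∈ U, (X ^ n) u ∈ U := by
    intro n
    induction n with
    | zero => intro u hu; simpa using hu
    | succ n IH =>
      intro u hu
      rw [pow_succ, Module.End.mul_apply]
      exact IH _ (hXU u hu)
  have hRmono : ∀ a b : ℕ, a ≤ b → U.map (X ^ b) ≤ U.map (X ^ a) := by
    rintro a b hab x ⟨u, hu, rfl⟩
    refine ⟨(X ^ (b - a)) u, hXUpow _ u hu, ?_⟩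
    rw [← Module.End.mul_apply, ← pow_add]
    congr 2
    omega
  have hRbot : ∀ a, k ≤ a → U.map (X ^ a) = ⊥ := by
    intro a ha
    rw [eq_bot_iff]
    refine le_trans (hRmono k a ha) ?_
    rintro x ⟨u, hu, rfl⟩
    simp [hkU u hu]
  have hmapsucc : ∀ b : ℕ, U.map (X ^ (b + 1)) = Submodule.map X (U.map (X ^ b)) := by
    intro b
    rw [pow_succ', Module.End.mul_eq_comp, Submodule.map_comp]
  have hstab : ∀ b : ℕ, U.map (X ^ (b + 1)) = U.map (X ^ b) → U.map (X ^ b) = ⊥ := by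
    intro b hEq
    have hall : ∀ j : ℕ, U.map (X ^ (b + j)) = U.map (X ^ b) := by
      intro j
      induction j with
      | zero => rfl
      | succ j IH =>
        have : b + (j + 1) = (b + j) + 1 := by omega
        rw [this, hmapsucc, IH, ← hmapsucc, hEq]
    have := hall k
    rw [← this]
    exact hRbot _ (by omega)
  intro p
  induction p with
  | zero =>
    right
    rw [pow_zero, Module.End.one_eq_id, Submodule.map_id]
    omega
  | succ p IH =>
    rcases IH with h | h
    · left
      rw [eq_bot_iff, ← h]
      exact hRmono p (p + 1) (by omega)
    · by_cases hb : U.map (X ^ (p + 1)) = ⊥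
      · left; exact hb
      · right
        have hne : U.map (X ^ (p + 1)) ≠ U.map (X ^ p) := by
          intro h'
          apply hb
          rw [eq_bot_iff, ← hstab p h']
          exact hRmono p (p + 1) (by omega)
        have hlt : U.map (X ^ (p + 1)) < U.map (X ^ p) :=
          lt_of_le_of_ne (hRmono p (p + 1) (by omega)) hne
        have := Submodule.finrank_lt_finrank_of_lt hlt
        omega

end Chain

/-- Lemma 2.4: commuting nilpotent operators `X`, `Y`, with `V = W ⊕ U`, `W`, `U`
`X`-invariant, `YW ⊆ U`, and all Jordan blocks of `X|_W` of size `> k + 1`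
where `k = h(X|_U)` is the nilpotency index of `X` on `U` (the Jordan-block condition
is expressed via kernel dimensions: the number of blocks of `X|_W` of size `≥ k + 2`
equals the total number of blocks `dim Ker(X|_W)`). Then `Y^q X^p = 0` on all of `V`
whenever `q ≥ 1` and `p + q > dim U + 1`. -/
theorem stmt6 (F : Type*) [Field F] (V : Type*) [AddCommGroup V] [Module F V]
    [FiniteDimensional F V]
    (X Y : V →ₗ[F] V) (hXnil : IsNilpotent X) (hYnil : IsNilpotent Y)
    (hc : Commute X Y)
    (W U : Submodule F V) (hcompl : IsCompl W U)
    (hXW : ∀ x ∈ W, X x ∈ W) (hXU : ∀ x ∈ U, X x ∈ U) (hYW : ∀ x ∈ W, Y x ∈ U)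
    (k : ℕ) (hk1 : 1 ≤ k) (hk2 : ∀ x ∈ U, (X ^ k) x = 0)
    (hk3 : k = 1 ∨ ∃ x ∈ U, (X ^ (k - 1)) x ≠ 0)
    (hblocks : Module.finrank F (LinearMap.ker ((X.restrict hXW) ^ (k + 2)))
      = Module.finrank F (LinearMap.ker ((X.restrict hXW) ^ (k + 1)))
        + Module.finrank F (LinearMap.ker (X.restrict hXW)))
    (p q : ℕ) (hq1 : 1 ≤ q) (hpq : p + q > Module.finrank F U + 1) :
    Y ^ q * X ^ p = 0 := by
  classical
  obtain ⟨N, hYN⟩ := hYnil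
  -- the projection onto U along W
  set π : V →ₗ[F] U := U.projectionOnto W hcompl.symm with hπ
  set P : V →ₗ[F] V := U.subtype ∘ₗ π with hPdef
  have hP1 : ∀ v, P v ∈ U := fun v => (π v).2
  have hP2 : ∀ u ∈ U, P u = u := by
    intro u hu
    have := Submodule.projectionOnto_apply_left hcompl.symm ⟨u, hu⟩
    have h2 := congrArg (Subtype.val) this
    exact h2
  have hPW : ∀ w ∈ W, P w = 0 := by
    intro w hw
    have h0 : π w = 0 := Submodule.projectionOnto_apply_of_mem_right hcompl.symm hw
    simp [hPdef, h0]
  have hdec : ∀ v : V, ∃ u ∈ U, ∃ w ∈ W, v = u + w := by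
    intro v
    have hv : v ∈ U ⊔ W := by
      rw [hcompl.symm.sup_eq_top]
      trivial
    obtain ⟨u, hu, w, hw, hvw⟩ := Submodule.mem_sup.mp hv
    exact ⟨u, hu, w, hw, hvw.symm⟩
  have hQW : ∀ v, v - P v ∈ W := by
    intro v
    obtain ⟨u, hu, w, hw, rfl⟩ := hdec v
    have : P (u + w) = u := by rw [map_add, hP2 u hu, hPW w hw, add_zero]
    rw [this]
    simpa using hw
  have hPX : ∀ v, P (X v) = X (P v) := by
    intro v
    obtain ⟨u, hu, w, hw, rfl⟩ := hdec v
    have hp : P (u + w) = u := by rw [map_add, hP2 u hu, hPW w hw, add_zero]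
    rw [map_add, map_add, hP2 _ (hXU u hu), hPW _ (hXW w hw), add_zero, hp]
  -- the Jordan-block fact
  have hJ : ∀ a, a < k → ∀ w ∈ W, (X ^ (k - a)) w = 0 → ∃ w' ∈ W, (X ^ (a + 2)) w' = w := by
    intro a hak w hw hwk
    have hle := ker_pow_le_range_pow (X.restrict hXW) k (k - a) (a + 2) (by omega) hblocks
    have hmem : (⟨w, hw⟩ : W) ∈ LinearMap.ker ((X.restrict hXW) ^ (k - a)) := by
      rw [LinearMap.mem_ker, Module.End.pow_restrict]
      apply Subtype.ext
      rw [LinearMap.restrict_coe_apply]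
      simpa using hwk
    obtain ⟨w', hw'⟩ := hle hmem
    refine ⟨(w' : V), w'.2, ?_⟩
    have h2 := congrArg (Subtype.val) hw'
    rwa [Module.End.pow_restrict, LinearMap.restrict_coe_apply] at h2
  have hcY : ∀ n (v : V), (X ^ n) (Y v) = Y ((X ^ n) v) := by
    intro n v
    simpa [pow_one] using LinearMap.congr_fun ((hc.pow_pow n 1).eq) v
  have key := lemKey X Y P U W k N hYN hc hXU hYW hP1 hP2 hPX hQW hk2 hJ
  -- final assembly
  ext v
  rw [Module.End.mul_apply, LinearMap.zero_apply]
  obtain ⟨u, hu, w, hw, rfl⟩ := hdec v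
  rw [map_add, map_add]
  have hterm1 : (Y ^ q) ((X ^ p) u) = 0 := by
    have hmem : (X ^ p) u ∈ Submodule.map (X ^ p) U := ⟨u, hu, rfl⟩
    rcases rank_chain X U k hXU hk2 p with h | h
    · rw [h] at hmem
      simp only [Submodule.mem_bot] at hmem
      rw [hmem, map_zero]
    · exact key p q (by omega) _ hmem
  have hterm2 : (Y ^ q) ((X ^ p) w) = 0 := by
    obtain ⟨q', rfl⟩ : ∃ q', q = q' + 1 := ⟨q - 1, by omega⟩
    rw [pow_succ, Module.End.mul_apply, ← hcY]
    have hmem : (X ^ p) (Y w) ∈ Submodule.map (X ^ p) U := ⟨Y w, hYW w hw, rfl⟩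
    rcases rank_chain X U k hXU hk2 p with h | h
    · rw [h] at hmem
      simp only [Submodule.mem_bot] at hmem
      rw [hmem, map_zero]
    · exact key p q' (by omega) _ hmem
  rw [hterm1, hterm2, add_zero]
end

section
/- Under the same hypotheses, for any operator Z commuting with both X and Y and any r ≥ dim U + 2, one has (Y + XZ)^r = (XZ)^r. -/
/-!
Since `Y`, `X` and `Z` commute, the binomial theorem reduces the claim to `Y ^ a * X ^ b = 0`
whenever `a ≥ 1` and `a + b ≥ dim U + 2`. The Jordan block condition on `X|_W` says
`ker X ^ j ⊓ W ⊆ X ^ (k + 2 - j) W`, so `Y` maps `ker X ^ j ⊓ W` into `ker X ^ (j - 2)`. With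
`m j = dim (ker X ^ j ⊓ U)`, which increases strictly up to `m k = dim U`, an induction along the
kernel filtration, using that `Y` is nilpotent on each successive quotient, shows that
`Y ^ (m j + 1)` kills `ker X ^ j`. Finally `X ^ k * Y = 0`, so `X ^ b (Y v) ∈ ker X ^ (k - b)`,
and `m (k - b) + b ≤ dim U`.
-/

open Module LinearMap Submodule

lemma Commute.add_pow_eq_right_pow {R : Type*} [Semiring R] {a b : R} (h : Commute a b) {n : ℕ}
    (hab : ∀ i, 0 < i → i ≤ n → a ^ i * b ^ (n - i) = 0) : (a + b) ^ n = b ^ n := by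
  rw [h.add_pow, Finset.sum_eq_single 0]
  · simp
  · intro i hi hi0
    rw [hab i (Nat.pos_of_ne_zero hi0) (Nat.lt_succ_iff.mp (Finset.mem_range.mp hi)), zero_mul]
  · simp

lemma Nat.apply_sub_add_le_of_forall_lt_succ {f : ℕ → ℕ} {k : ℕ}
    (hf : ∀ i < k, f i < f (i + 1)) {b : ℕ} (hb : b ≤ k) : f (k - b) + b ≤ f k := by
  induction b with
  | zero => simp
  | succ b ih =>
    have := hf (k - (b + 1)) (by omega)
    rw [show k - (b + 1) + 1 = k - b by omega] at this
    have := ih (by omega)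
    omega

section KernelsAndRangesOfPowers

variable {R M : Type*} [Ring R] [AddCommGroup M] [Module R M]

lemma Module.End.ker_pow_mono (N : End R M) {i j : ℕ} (h : i ≤ j) :
    ker (N ^ i) ≤ ker (N ^ j) := by
  rw [← Nat.sub_add_cancel h, pow_add]
  exact ker_le_ker_comp _ _

lemma Module.End.range_pow_anti (N : End R M) {i j : ℕ} (h : i ≤ j) :
    range (N ^ j) ≤ range (N ^ i) := by
  rw [← Nat.add_sub_cancel' h, pow_add]
  exact range_comp_le_range _ _

lemma Module.End.ker_pow_le_range_pow {N : End R M} {n : ℕ} (h : ker N ≤ range (N ^ n))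
    {j : ℕ} (hj : j ≤ n + 1) : ker (N ^ j) ≤ range (N ^ (n + 1 - j)) := by
  induction j with
  | zero => simp [Module.End.one_eq_id]
  | succ j ih =>
    intro x hx
    obtain ⟨y, hy⟩ : (N ^ j) x ∈ range (N ^ n) := h <| by
      rwa [mem_ker, ← Module.End.mul_apply, ← pow_succ']
    have hxy : x - (N ^ (n - j)) y ∈ ker (N ^ j) := by
      rw [mem_ker, map_sub, ← Module.End.mul_apply, ← pow_add, Nat.add_sub_cancel' (by omega), hy,
        sub_self]
    have := N.range_pow_anti (by omega : n - j ≤ n + 1 - j) (ih (by omega) hxy)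
    simpa [show n + 1 - (j + 1) = n - j by omega] using
      add_mem this (mem_range_self (N ^ (n - j)) y)

lemma Commute.pow_apply_eq_zero {X Y : End R M} (hc : Commute X Y) {j : ℕ} {x : M}
    (hx : (X ^ j) x = 0) : (X ^ j) (Y x) = 0 := by
  rw [← Module.End.mul_apply, (hc.pow_left j).eq, Module.End.mul_apply, hx, map_zero]

lemma Submodule.ker_le_inf_sup_inf {f : End R M} {W U : Submodule R M} (hWU : IsCompl W U)
    (hW : ∀ x ∈ W, f x ∈ W) (hU : ∀ x ∈ U, f x ∈ U) : ker f ≤ ker f ⊓ W ⊔ ker f ⊓ U := by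
  intro x hx
  obtain ⟨w, hw, u, hu, rfl⟩ := mem_sup.mp (hWU.sup_eq_top ▸ mem_top : x ∈ W ⊔ U)
  rw [mem_ker, map_add, add_eq_zero_iff_eq_neg] at hx
  have hfw : f w = 0 := (disjoint_def.mp hWU.disjoint) _ (hW w hw) (hx ▸ neg_mem (hU u hu))
  have hfu : f u = 0 := by rwa [hfw, eq_comm, neg_eq_zero] at hx
  exact add_mem_sup ⟨hfw, hw⟩ ⟨hfu, hu⟩

end KernelsAndRangesOfPowers

section FiniteDimensional

variable {F E : Type*} [Field F] [AddCommGroup E] [Module F E] [FiniteDimensional F E]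

lemma IsNilpotent.pow_finrank_eq_zero {N : End F E} (h : IsNilpotent N) :
    N ^ finrank F E = 0 := by
  simpa only [h.charpoly_eq_X_pow_finrank, map_pow, Polynomial.aeval_X] using N.aeval_self_charpoly

lemma Module.End.finrank_ker_pow_succ (N : End F E) (n : ℕ) :
    finrank F (ker (N ^ (n + 1))) =
      finrank F ((ker (N ^ (n + 1))).map (N ^ n)) + finrank F (ker (N ^ n)) := by
  have hle : ker (N ^ n) ≤ ker (N ^ (n + 1)) := N.ker_pow_mono n.le_succ
  have := ((N ^ n).domRestrict (ker (N ^ (n + 1)))).finrank_range_add_finrank_ker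
  rwa [range_domRestrict, ker_domRestrict, (comapSubtypeEquivOfLe hle).finrank_eq, eq_comm] at this

/-- The hypothesis says that every Jordan block of `N` for the eigenvalue `0` has size `> n`. -/
lemma Module.End.ker_le_range_pow_of_finrank_ker_pow_succ {N : End F E} {n : ℕ}
    (h : finrank F (ker (N ^ (n + 1))) = finrank F (ker (N ^ n)) + finrank F (ker N)) :
    ker N ≤ range (N ^ n) := by
  have hmap : (ker (N ^ (n + 1))).map (N ^ n) ≤ ker N := by
    rintro _ ⟨x, hx, rfl⟩
    rwa [mem_ker, ← Module.End.mul_apply, ← pow_succ']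
  have heq := eq_of_le_of_finrank_eq hmap (by have := N.finrank_ker_pow_succ n; omega)
  exact heq ▸ map_le_range

/-- A nilpotent operator acts nilpotently on `T ⧸ S`, so its `dim (T ⧸ S)`-th power maps `T`
into `S`. -/
lemma Submodule.le_comap_pow_finrank_sub_of_isNilpotent {N : End F E} (hN : IsNilpotent N)
    {S T : Submodule F E} (hST : S ≤ T) (hS : ∀ x ∈ S, N x ∈ S) (hT : ∀ x ∈ T, N x ∈ T) :
    T ≤ S.comap (N ^ (finrank F T - finrank F S)) := by
  set S' : Submodule F T := S.comap T.subtype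
  have hS' : S' ≤ S'.comap (N.restrict hT) := fun x hx ↦ hS _ hx
  have hdim : finrank F (T ⧸ S') = finrank F T - finrank F S := by
    rw [← S'.finrank_quotient_add_finrank, (comapSubtypeEquivOfLe hST).finrank_eq,
      Nat.add_sub_cancel]
  have hQ : (S'.mapQ S' (N.restrict hT) hS') ^ finrank F (T ⧸ S') = 0 := by
    refine IsNilpotent.pow_finrank_eq_zero ?_
    obtain ⟨n, hn⟩ := Module.End.isNilpotent.restrict hT hN
    exact ⟨n, by rw [← mapQ_pow]; ext; simp [hn]⟩
  intro x hx
  have := congr($hQ (S'.mkQ ⟨x, hx⟩))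
  rw [← mapQ_pow, mkQ_apply, mapQ_apply, LinearMap.zero_apply, Submodule.Quotient.mk_eq_zero,
    Module.End.pow_restrict, hdim] at this
  exact this

end FiniteDimensional

section BlockOperators

variable {F V : Type*} [Field F] [AddCommGroup V] [Module F V] {X Y : End F V}
  {W U : Submodule F V}

/-- `ker X ^ j ⊓ W ⊆ X ^ (k + 2 - j) W`, hence `Y w ∈ X ^ (k + 2 - j) U`. -/
lemma pow_sub_two_apply_eq_zero_of_mem_ker [FiniteDimensional F V] (hc : Commute X Y)
    (hXW : ∀ x ∈ W, X x ∈ W) (hYW : ∀ x ∈ W, Y x ∈ U) {k : ℕ} (hk : ∀ x ∈ U, (X ^ k) x = 0)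
    (hblocks : finrank F (ker ((X.restrict hXW) ^ (k + 2)))
      = finrank F (ker ((X.restrict hXW) ^ (k + 1))) + finrank F (ker (X.restrict hXW)))
    {j : ℕ} (hj : j ≤ k + 2) {w : V} (hw : w ∈ W) (hjw : (X ^ j) w = 0) :
    (X ^ (j - 2)) (Y w) = 0 := by
  set N : End F W := X.restrict hXW
  have hwN : ⟨w, hw⟩ ∈ ker (N ^ j) := by
    rw [mem_ker, Module.End.pow_restrict]
    exact Subtype.ext hjw
  obtain ⟨w', hw'⟩ := N.ker_pow_le_range_pow (N.ker_le_range_pow_of_finrank_ker_pow_succ hblocks)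
    hj hwN
  rw [Module.End.pow_restrict] at hw'
  replace hw' : (X ^ (k + 2 - j)) w' = w := congr(($hw' : V))
  have hYX : Y ((X ^ (k + 2 - j)) w') = (X ^ (k + 2 - j)) (Y w') := by
    rw [← Module.End.mul_apply, ← Module.End.mul_apply, (hc.pow_left _).eq]
  rw [← hw', hYX, ← Module.End.mul_apply, ← pow_add,
    ← Nat.sub_add_cancel (by omega : k ≤ j - 2 + (k + 2 - j)), pow_add, Module.End.mul_apply,
    hk _ (hYW _ w'.2), map_zero]

lemma ker_pow_inf_lt_ker_pow_succ_inf (hXU : ∀ x ∈ U, X x ∈ U) {k : ℕ} {x : V} (hxU : x ∈ U)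
    (hx : (X ^ (k - 1)) x ≠ 0) (hxk : (X ^ k) x = 0) {i : ℕ} (hi : i < k) :
    ker (X ^ i) ⊓ U < ker (X ^ (i + 1)) ⊓ U := by
  refine lt_of_le_of_ne (inf_le_inf_right _ (X.ker_pow_mono i.le_succ)) fun h ↦ hx ?_
  have hmem : (X ^ (k - 1 - i)) x ∈ ker (X ^ (i + 1)) ⊓ U := by
    refine mem_inf.mpr ⟨?_, Module.End.pow_apply_mem_of_forall_mem _ hXU _ hxU⟩
    rwa [mem_ker, ← Module.End.mul_apply, ← pow_add, show i + 1 + (k - 1 - i) = k by omega]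
  have := (mem_inf.mp (h ▸ hmem)).1
  rwa [mem_ker, ← Module.End.mul_apply, ← pow_add, show i + (k - 1 - i) = k - 1 by omega] at this

variable [FiniteDimensional F V]

/-- Write `m j = dim (ker X ^ j ⊓ U)`. The quotient of `T = ker X ^ (j + 1)` by
`S = ker X ^ j ⊔ (T ⊓ W)` has dimension at most `m (j + 1) - m j`, so that power of `Y` pushes `T`
into `S`; and `Y ^ (m j + 1)` kills `S` by induction, because `Y` moves `T ⊓ W` two steps down the
filtration and `m (j - 1) < m j`. -/
lemma ker_pow_le_ker_pow_finrank_inf_succ (hY : IsNilpotent Y) (hc : Commute X Y)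
    (hWU : IsCompl W U) (hXW : ∀ x ∈ W, X x ∈ W) (hXU : ∀ x ∈ U, X x ∈ U) {k : ℕ}
    (hYW : ∀ j ≤ k, ∀ w ∈ W, (X ^ j) w = 0 → (X ^ (j - 2)) (Y w) = 0)
    (hm : ∀ i < k, finrank F ↥(ker (X ^ i) ⊓ U) < finrank F ↥(ker (X ^ (i + 1)) ⊓ U))
    {j : ℕ} (hj : j ≤ k) : ker (X ^ j) ≤ ker (Y ^ (finrank F ↥(ker (X ^ j) ⊓ U) + 1)) := by
  induction j using Nat.strong_induction_on with
  | _ j ih =>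
  rcases j with _ | j
  · simp [Module.End.one_eq_id]
  set T := ker (X ^ (j + 1))
  set S := ker (X ^ j) ⊔ T ⊓ W
  have hYWj : ∀ w ∈ T ⊓ W, Y w ∈ ker (X ^ (j - 1)) := fun w hw ↦ by
    simpa using hYW (j + 1) hj w hw.2 hw.1
  have hYker : ∀ i, ∀ x ∈ ker (X ^ i), Y x ∈ ker (X ^ i) := fun i x hx ↦ hc.pow_apply_eq_zero hx
  have hST : S ≤ T := sup_le (X.ker_pow_mono j.le_succ) inf_le_left
  have hS : ∀ x ∈ S, Y x ∈ S := by
    intro x hx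
    obtain ⟨y, hy, w, hw, rfl⟩ := mem_sup.mp hx
    rw [map_add]
    exact add_mem (mem_sup_left (hYker j y hy))
      (mem_sup_left (X.ker_pow_mono (by omega) (hYWj w hw)))
  have hpush := le_comap_pow_finrank_sub_of_isNilpotent hY hST hS (hYker (j + 1))
  have hdim : finrank F T - finrank F S + finrank F ↥(ker (X ^ j) ⊓ U) ≤ finrank F ↥(T ⊓ U) := by
    have hTle : T ≤ S ⊔ T ⊓ U :=
      (ker_le_inf_sup_inf hWU (fun x hx ↦ Module.End.pow_apply_mem_of_forall_mem _ hXW x hx)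
        (fun x hx ↦ Module.End.pow_apply_mem_of_forall_mem _ hXU x hx)).trans
        (sup_le_sup_right le_sup_right _)
    have hinf : ker (X ^ j) ⊓ U ≤ S ⊓ (T ⊓ U) :=
      le_inf (inf_le_left.trans le_sup_left) (inf_le_inf_right _ (X.ker_pow_mono j.le_succ))
    have := finrank_sup_add_finrank_inf_eq S (T ⊓ U)
    have := finrank_mono hTle
    have := finrank_mono hinf
    have := finrank_mono hST
    omega
  have hprev : ker (X ^ (j - 1)) ≤ ker (Y ^ finrank F ↥(ker (X ^ j) ⊓ U)) := by
    rcases j with _ | i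
    · simp [Module.End.one_eq_id]
    · exact (ih i (by omega) (by omega)).trans (Y.ker_pow_mono (hm i (by omega)))
  have hSker : S ≤ ker (Y ^ (finrank F ↥(ker (X ^ j) ⊓ U) + 1)) := by
    refine sup_le (ih j (by omega) (by omega)) fun w hw ↦ ?_
    rw [mem_ker, pow_succ, Module.End.mul_apply]
    exact hprev (hYWj w hw)
  intro x hx
  have hx' := hSker (hpush hx)
  rw [mem_ker, ← Module.End.mul_apply, ← pow_add] at hx'
  exact Y.ker_pow_mono (by omega) hx'

lemma pow_mul_pow_eq_zero_of_finrank_add_two_le (hY : IsNilpotent Y) (hc : Commute X Y)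
    (hWU : IsCompl W U) (hXW : ∀ x ∈ W, X x ∈ W) (hXU : ∀ x ∈ U, X x ∈ U)
    (hYW : ∀ x ∈ W, Y x ∈ U) {k : ℕ}
    (hk : ∀ x ∈ U, (X ^ k) x = 0)
    (hblocks : finrank F (ker ((X.restrict hXW) ^ (k + 2)))
      = finrank F (ker ((X.restrict hXW) ^ (k + 1))) + finrank F (ker (X.restrict hXW)))
    {x : V} (hxU : x ∈ U) (hx : (X ^ (k - 1)) x ≠ 0) {a b : ℕ} (ha : 0 < a)
    (hab : finrank F U + 2 ≤ a + b) : Y ^ a * X ^ b = 0 := by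
  have hXkY : ∀ v, (X ^ k) (Y v) = 0 := by
    intro v
    obtain ⟨w, hw, u, hu, rfl⟩ := mem_sup.mp (hWU.sup_eq_top ▸ mem_top : v ∈ W ⊔ U)
    rw [map_add, map_add, hk _ (hYW w hw), hc.pow_apply_eq_zero (hk u hu), add_zero]
  have hm : ∀ i < k, finrank F ↥(ker (X ^ i) ⊓ U) < finrank F ↥(ker (X ^ (i + 1)) ⊓ U) :=
    fun i hi ↦ finrank_lt_finrank_of_lt (ker_pow_inf_lt_ker_pow_succ_inf hXU hxU hx (hk x hxU) hi)
  rw [← Nat.sub_add_cancel ha, pow_succ, mul_assoc, ← (hc.pow_left b).eq]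
  ext v
  rw [Module.End.mul_apply, Module.End.mul_apply, LinearMap.zero_apply]
  rcases le_or_gt k b with hkb | hbk
  · rw [← Nat.sub_add_cancel hkb, pow_add, Module.End.mul_apply, hXkY, map_zero, map_zero]
  · have hv : (X ^ b) (Y v) ∈ ker (X ^ (k - b)) := by
      rw [mem_ker, ← Module.End.mul_apply, ← pow_add, Nat.sub_add_cancel hbk.le, hXkY]
    have hker := ker_pow_le_ker_pow_finrank_inf_succ hY hc hWU hXW hXU
      (fun j _ w hw hjw ↦ pow_sub_two_apply_eq_zero_of_mem_ker hc hXW hYW hk hblocks (by omega)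
        hw hjw) hm (Nat.sub_le k b) hv
    have hbound := Nat.apply_sub_add_le_of_forall_lt_succ hm hbk.le
    have hU : finrank F ↥(ker (X ^ k) ⊓ U) ≤ finrank F U := finrank_mono inf_le_right
    exact Y.ker_pow_mono (by omega) hker

end BlockOperators

theorem stmt7_general (F : Type*) [Field F] (V : Type*) [AddCommGroup V] [Module F V]
    [FiniteDimensional F V]
    (X Y : V →ₗ[F] V) (hYnil : IsNilpotent Y)
    (hc : Commute X Y)
    (W U : Submodule F V) (hcompl : IsCompl W U)
    (hXW : ∀ x ∈ W, X x ∈ W) (hXU : ∀ x ∈ U, X x ∈ U) (hYW : ∀ x ∈ W, Y x ∈ U)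
    (k : ℕ) (hk2 : ∀ x ∈ U, (X ^ k) x = 0)
    (hk3 : k = 1 ∨ ∃ x ∈ U, (X ^ (k - 1)) x ≠ 0)
    (hblocks : Module.finrank F (LinearMap.ker ((X.restrict hXW) ^ (k + 2)))
      = Module.finrank F (LinearMap.ker ((X.restrict hXW) ^ (k + 1)))
        + Module.finrank F (LinearMap.ker (X.restrict hXW)))
    (Z : V →ₗ[F] V) (hZX : Commute Z X) (hZY : Commute Z Y)
    (r : ℕ) (hr : Module.finrank F U + 2 ≤ r) :
    (Y + X * Z) ^ r = (X * Z) ^ r := by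
  by_cases hU : U = ⊥
  · have hY : Y = 0 := by
      ext v
      simpa [hU] using hYW v (eq_top_of_isCompl_bot (hU ▸ hcompl) ▸ mem_top)
    rw [hY, zero_add]
  obtain ⟨x, hxU, hx⟩ : ∃ x ∈ U, (X ^ (k - 1)) x ≠ 0 := by
    rcases hk3 with rfl | h
    · simpa using (Submodule.ne_bot_iff U).mp hU
    · exact h
  refine (hc.symm.mul_right hZY.symm).add_pow_eq_right_pow fun i hi _ ↦ ?_
  rw [hZX.symm.mul_pow, ← mul_assoc, pow_mul_pow_eq_zero_of_finrank_add_two_le hYnil hc hcompl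
    hXW hXU hYW hk2 hblocks hxU hx hi (by omega), zero_mul]

/-- Lemma 2.4: commuting nilpotent operators `X`, `Y`, with `V = W ⊕ U`, `W`, `U`
`X`-invariant, `YW ⊆ U`, and all Jordan blocks of `X|_W` of size `> k + 1`
where `k = h(X|_U)` is the nilpotency index of `X` on `U` (the Jordan-block condition
is expressed via kernel dimensions: the number of blocks of `X|_W` of size `≥ k + 2`
equals the total number of blocks `dim Ker(X|_W)`). If moreover `Z` commutes with `X` and `Y`,
then `(Y + XZ)^r = (XZ)^r` for every `r ≥ dim U + 2`. -/
theorem stmt7 (F : Type*) [Field F] (V : Type*) [AddCommGroup V] [Module F V]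
    [FiniteDimensional F V]
    (X Y : V →ₗ[F] V) (hXnil : IsNilpotent X) (hYnil : IsNilpotent Y)
    (hc : Commute X Y)
    (W U : Submodule F V) (hcompl : IsCompl W U)
    (hXW : ∀ x ∈ W, X x ∈ W) (hXU : ∀ x ∈ U, X x ∈ U) (hYW : ∀ x ∈ W, Y x ∈ U)
    (k : ℕ) (hk1 : 1 ≤ k) (hk2 : ∀ x ∈ U, (X ^ k) x = 0)
    (hk3 : k = 1 ∨ ∃ x ∈ U, (X ^ (k - 1)) x ≠ 0)
    (hblocks : Module.finrank F (LinearMap.ker ((X.restrict hXW) ^ (k + 2)))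
      = Module.finrank F (LinearMap.ker ((X.restrict hXW) ^ (k + 1)))
        + Module.finrank F (LinearMap.ker (X.restrict hXW)))
    (Z : V →ₗ[F] V) (hZX : Commute Z X) (hZY : Commute Z Y)
    (r : ℕ) (hr : Module.finrank F U + 2 ≤ r) :
    (Y + X * Z) ^ r = (X * Z) ^ r :=
  stmt7_general F V X Y hYnil hc W U hcompl hXW hXU hYW k hk2 hk3 hblocks Z hZX hZY r hr
end

section
/- If m > n/2 and X, Y are nilpotent endomorphisms of an n-dimensional vector space with X^m = Y^m = 0 and XY = YX, then for all p, q ≥ 0 with p + q = m one has Y^q X^p = 0. -/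
private lemma exists_ker {F V : Type*} [Field F] [AddCommGroup V] [Module F V] [Nontrivial V]
    (f : V →ₗ[F] V) (m : ℕ) (hf : f ^ m = 0) : ∃ v : V, v ≠ 0 ∧ f v = 0 := by
  by_contra h
  push_neg at h
  have hinj : Function.Injective f := by
    rw [← LinearMap.ker_eq_bot, Submodule.eq_bot_iff]
    intro x hx
    by_contra hx0
    exact h x hx0 hx
  have hinj' : Function.Injective (f ^ m) := by
    rw [Module.End.coe_pow]; exact hinj.iterate m
  obtain ⟨x, hx⟩ := exists_ne (0 : V)
  apply hx
  apply hinj'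
  rw [hf]; simp

private lemma exists_common_ker {F V : Type*} [Field F] [AddCommGroup V] [Module F V]
    [Nontrivial V] (X Y : V →ₗ[F] V) (hc : Commute X Y) (m : ℕ)
    (hX : X ^ m = 0) (hY : Y ^ m = 0) : ∃ v : V, v ≠ 0 ∧ X v = 0 ∧ Y v = 0 := by
  obtain ⟨v1, hv1, hXv1⟩ := exists_ker X m hX
  have hYW : ∀ x ∈ LinearMap.ker X, Y x ∈ LinearMap.ker X := by
    intro x hx
    rw [LinearMap.mem_ker] at hx ⊢
    have h2 := DFunLike.congr_fun hc.eq x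
    simp only [Module.End.mul_apply] at h2
    rw [h2, hx, map_zero]
  have hWnt : Nontrivial (LinearMap.ker X) :=
    Submodule.nontrivial_iff_ne_bot.2 (by
      intro hbot
      rw [Submodule.eq_bot_iff] at hbot
      exact hv1 (hbot v1 hXv1))
  have hY' : (Y.restrict hYW) ^ m = 0 := by
    rw [Module.End.pow_restrict]
    ext x
    simp [LinearMap.restrict_apply, hY]
  obtain ⟨u, hu, hYu⟩ := exists_ker (Y.restrict hYW) m hY'
  refine ⟨(u : V), fun h0 => hu (ZeroMemClass.coe_eq_zero.1 h0), u.2, ?_⟩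
  have := congrArg (Subtype.val) hYu
  simpa [LinearMap.restrict_apply] using this

private lemma key (F : Type*) [Field F] :
    ∀ (n : ℕ) (V : Type*) [AddCommGroup V] [Module F V] [FiniteDimensional F V],
      Module.finrank F V ≤ n → ∀ m : ℕ, 1 ≤ m → Module.finrank F V < 2 * m →
      ∀ X Y : V →ₗ[F] V, Commute X Y → X ^ m = 0 → Y ^ m = 0 →
      ∀ p q : ℕ, p + q = m → Y ^ q * X ^ p = 0 := by
  intro n
  induction n with
  | zero =>
    intro V _ _ _ hn m _ _ X Y _ _ _ p q _
    have h0 : Module.finrank F V = 0 := Nat.le_zero.1 hn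
    have : Subsingleton V := Module.finrank_zero_iff.1 h0
    exact LinearMap.ext fun x => Subsingleton.elim _ _
  | succ n IH =>
    intro V _ _ _ hn m hm1 hm2 X Y hc hX hY
    by_cases hV0 : Subsingleton V
    · intro p q _; exact LinearMap.ext fun x => Subsingleton.elim _ _
    have hVnt : Nontrivial V := not_subsingleton_iff_nontrivial.1 hV0
    -- monomial multiplication
    have mono_mul : ∀ s t s' t' : ℕ,
        (Y ^ t * X ^ s) * (Y ^ t' * X ^ s') = Y ^ (t + t') * X ^ (s + s') := by
      intro s t s' t'
      have h2 : X ^ s * Y ^ t' = Y ^ t' * X ^ s := (hc.pow_pow s t').eq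
      rw [pow_add, pow_add, mul_assoc, ← mul_assoc (X ^ s), h2, mul_assoc, ← mul_assoc,
        ← mul_assoc]
    -- common kernel
    obtain ⟨v₀, hv₀, hXv₀, hYv₀⟩ := exists_common_ker X Y hc m hX hY
    set K : Submodule F V := LinearMap.ker X ⊓ LinearMap.ker Y with hKdef
    have hv₀K : v₀ ∈ K := Submodule.mem_inf.2 ⟨LinearMap.mem_ker.2 hXv₀, LinearMap.mem_ker.2 hYv₀⟩
    have hXK : K ≤ K.comap X := by
      intro x hx
      rw [Submodule.mem_inf, LinearMap.mem_ker, LinearMap.mem_ker] at hx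
      rw [Submodule.mem_comap, hx.1]
      exact K.zero_mem
    have hYK : K ≤ K.comap Y := by
      intro x hx
      rw [Submodule.mem_inf, LinearMap.mem_ker, LinearMap.mem_ker] at hx
      rw [Submodule.mem_comap, hx.2]
      exact K.zero_mem
    have hπpow : ∀ (f : V →ₗ[F] V) (hf : K ≤ K.comap f) (k : ℕ) (v : V),
        ((K.mapQ K f hf) ^ k) (K.mkQ v) = K.mkQ ((f ^ k) v) := by
      intro f hf k
      induction k with
      | zero => intro v; simp
      | succ k ih =>
        intro v
        rw [pow_succ, pow_succ, Module.End.mul_apply, Module.End.mul_apply,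
          Submodule.mkQ_apply, Submodule.mapQ_apply, ← Submodule.mkQ_apply]
        exact ih (f v)
    have hXbm : (K.mapQ K X hXK) ^ m = 0 := by
      apply LinearMap.ext; intro z
      obtain ⟨v, rfl⟩ := K.mkQ_surjective z
      rw [hπpow X hXK m v, hX]
      simp
    have hYbm : (K.mapQ K Y hYK) ^ m = 0 := by
      apply LinearMap.ext; intro z
      obtain ⟨v, rfl⟩ := K.mkQ_surjective z
      rw [hπpow Y hYK m v, hY]
      simp
    have hcb : Commute (K.mapQ K X hXK) (K.mapQ K Y hYK) := by
      show _ * _ = _ * _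
      apply LinearMap.ext; intro z
      obtain ⟨v, rfl⟩ := K.mkQ_surjective z
      have h2 := DFunLike.congr_fun hc.eq v
      simp only [Module.End.mul_apply] at h2 ⊢
      rw [Submodule.mkQ_apply, Submodule.mapQ_apply, Submodule.mapQ_apply,
        Submodule.mapQ_apply, Submodule.mapQ_apply, h2]
    have hKpos : 0 < Module.finrank F K := by
      rw [Module.finrank_pos_iff]
      refine Submodule.nontrivial_iff_ne_bot.2 (fun hb => hv₀ ?_)
      rw [Submodule.eq_bot_iff] at hb
      exact hb v₀ hv₀K
    have hq1 := Submodule.finrank_quotient_add_finrank K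
    have HQ := IH (V ⧸ K) (by omega) m hm1 (by omega) _ _ hcb hXbm hYbm
    have HK : ∀ p q : ℕ, p + q = m → ∀ v : V, (Y ^ q * X ^ p) v ∈ K := by
      intro p q hpq v
      have h0 := DFunLike.congr_fun (HQ p q hpq) (K.mkQ v)
      rw [Module.End.mul_apply, hπpow X hXK p v, hπpow Y hYK q _, LinearMap.zero_apply,
        Submodule.mkQ_apply, Submodule.Quotient.mk_eq_zero] at h0
      rw [Module.End.mul_apply]
      exact h0
    -- all monomials of degree m+1 vanish
    have H1 : ∀ s t : ℕ, s + t = m + 1 → Y ^ t * X ^ s = 0 := by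
      intro s t hst
      rcases Nat.eq_zero_or_pos s with hs | hs
      · subst hs
        have ht : t = m + 1 := by omega
        subst ht
        simp [pow_succ, hY]
      · obtain ⟨s', rfl⟩ : ∃ s', s = s' + 1 := ⟨s - 1, by omega⟩
        have hmem : ∀ v : V, (Y ^ t * X ^ s') v ∈ K := HK s' t (by omega)
        have h4 : X * Y ^ t = Y ^ t * X := (hc.pow_right t).eq
        have h3 : Y ^ t * X ^ (s' + 1) = X * (Y ^ t * X ^ s') := by
          rw [pow_succ', ← mul_assoc, ← h4, mul_assoc]
        apply LinearMap.ext; intro v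
        rw [h3, Module.End.mul_apply, LinearMap.zero_apply]
        have h5 := hmem v
        rw [hKdef, Submodule.mem_inf, LinearMap.mem_ker, LinearMap.mem_ker] at h5
        exact h5.1
    have H2 : ∀ s t : ℕ, m + 1 ≤ s + t → Y ^ t * X ^ s = 0 := by
      intro s t h
      have hs'le : min s (m + 1) ≤ s := min_le_left _ _
      have ht'le : (m + 1) - min s (m + 1) ≤ t := by omega
      have heq : Y ^ t * X ^ s =
          (Y ^ (t - ((m + 1) - min s (m + 1))) * X ^ (s - min s (m + 1))) *
            (Y ^ ((m + 1) - min s (m + 1)) * X ^ (min s (m + 1))) := by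
        rw [mono_mul, Nat.sub_add_cancel ht'le, Nat.sub_add_cancel hs'le]
      rw [heq, H1 (min s (m + 1)) ((m + 1) - min s (m + 1)) (by omega), mul_zero]
    -- main argument
    intro p q hpq
    classical
    by_contra hne
    set S : Finset ℕ := (Finset.range (m + 1)).filter (fun s => Y ^ (m - s) * X ^ s ≠ 0) with hS
    have hpS : p ∈ S := by
      rw [hS, Finset.mem_filter, Finset.mem_range]
      refine ⟨by omega, ?_⟩
      have : m - p = q := by omega
      rw [this]; exact hne
    have hSne : S.Nonempty := ⟨p, hpS⟩
    set a := S.max' hSne with ha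
    have haS : a ∈ S := S.max'_mem hSne
    rw [hS, Finset.mem_filter, Finset.mem_range] at haS
    obtain ⟨ham, hane⟩ := haS
    have hmaxa : ∀ s ∈ S, s ≤ a := fun s hs => S.le_max' s hs
    have ha1 : 1 ≤ a := by
      rcases Nat.eq_zero_or_pos a with h0 | h0
      · exfalso; apply hane; rw [h0]; simp [hY]
      · exact h0
    have ha2 : a < m := by
      rcases Nat.lt_or_ge a m with h0 | h0
      · exact h0
      · exfalso; apply hane
        have : a = m := by omega
        rw [this]; simp [hX]
    set b := m - a with hb
    have hab : a + b = m := by omega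
    have hb1 : 1 ≤ b := by omega
    have hYXab : Y ^ b * X ^ a ≠ 0 := hane
    have HVdiag : ∀ s t : ℕ, s + t = m → a < s → Y ^ t * X ^ s = 0 := by
      intro s t hst hs
      by_contra hne2
      have hsS : s ∈ S := by
        rw [hS, Finset.mem_filter, Finset.mem_range]
        refine ⟨by omega, ?_⟩
        have : m - s = t := by omega
        rw [this]; exact hne2
      exact absurd (hmaxa s hsS) (by omega)
    obtain ⟨v, hv⟩ : ∃ v : V, (Y ^ b * X ^ a) v ≠ 0 := by
      by_contra h
      push_neg at h
      exact hYXab (LinearMap.ext fun u => h u)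
    have monov : ∀ (s t s' t' : ℕ) (u : V),
        (Y ^ t * X ^ s) ((Y ^ t' * X ^ s') u) = (Y ^ (t + t') * X ^ (s + s')) u := by
      intro s t s' t' u
      rw [← Module.End.mul_apply, mono_mul]
    have hLI : LinearIndependent F
        (fun ij : Fin (a + 1) × Fin (b + 1) => (Y ^ (ij.2 : ℕ) * X ^ (ij.1 : ℕ)) v) := by
      rw [Fintype.linearIndependent_iff]
      intro g hg
      suffices hscc : ∀ N : ℕ, ∀ (i : Fin (a + 1)) (j : Fin (b + 1)),
          ((i : ℕ) + (j : ℕ)) * (m + 1) + (i : ℕ) = N → g (i, j) = 0 by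
        intro ij
        exact hscc _ ij.1 ij.2 rfl
      intro N
      induction N using Nat.strong_induction_on with
      | _ N IHN =>
      intro i j hij
      have hia : (i : ℕ) ≤ a := Fin.is_le i
      have hjb : (j : ℕ) ≤ b := Fin.is_le j
      have happ := congrArg (fun z => (Y ^ (b - (j : ℕ)) * X ^ (a - (i : ℕ))) z) hg
      simp only [map_sum, map_smul, map_zero] at happ
      have hother : ∀ kl : Fin (a + 1) × Fin (b + 1), kl ∈ Finset.univ → kl ≠ (i, j) →
          g kl • (Y ^ (b - (j : ℕ)) * X ^ (a - (i : ℕ)))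
            ((Y ^ (kl.2 : ℕ) * X ^ (kl.1 : ℕ)) v) = 0 := by
        rintro ⟨k, l⟩ - hne3
        have hka : (k : ℕ) ≤ a := Fin.is_le k
        have hlb : (l : ℕ) ≤ b := Fin.is_le l
        rw [monov]
        rcases lt_trichotomy ((k : ℕ) + (l : ℕ)) ((i : ℕ) + (j : ℕ)) with hlt | heq | hgt
        · have hlt' : ((k : ℕ) + (l : ℕ)) * (m + 1) + (k : ℕ) < N := by
            have hmul := Nat.mul_le_mul_right (m + 1)
              (show (k : ℕ) + (l : ℕ) + 1 ≤ (i : ℕ) + (j : ℕ) from by omega)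
            rw [add_mul, one_mul] at hmul
            have hkm : (k : ℕ) ≤ m := by omega
            have him : (0 : ℕ) ≤ (i : ℕ) := Nat.zero_le _
            linarith [hij.ge, hij.le]
          rw [IHN _ hlt' k l rfl, zero_smul]
        · rcases lt_trichotomy (k : ℕ) (i : ℕ) with hki | hki | hki
          · have hlt' : ((k : ℕ) + (l : ℕ)) * (m + 1) + (k : ℕ) < N := by
              rw [heq, ← hij]
              exact Nat.add_lt_add_left hki _
            rw [IHN _ hlt' k l rfl, zero_smul]
          · exfalso
            apply hne3
            have hlj : (l : ℕ) = (j : ℕ) := by omega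
            exact Prod.ext (Fin.ext hki) (Fin.ext hlj)
          · have hz : Y ^ ((b - (j : ℕ)) + (l : ℕ)) * X ^ ((a - (i : ℕ)) + (k : ℕ)) = 0 :=
              HVdiag _ _ (by omega) (by omega)
            rw [hz, LinearMap.zero_apply, smul_zero]
        · have hz : Y ^ ((b - (j : ℕ)) + (l : ℕ)) * X ^ ((a - (i : ℕ)) + (k : ℕ)) = 0 :=
            H2 _ _ (by omega)
          rw [hz, LinearMap.zero_apply, smul_zero]
      have hsingle := Finset.sum_eq_single_of_mem (i, j) (Finset.mem_univ _) hother
      rw [hsingle] at happ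
      rw [monov, Nat.sub_add_cancel hjb, Nat.sub_add_cancel hia] at happ
      rcases smul_eq_zero.1 happ with h0 | h0
      · exact h0
      · exact absurd h0 hv
    have hcard := hLI.fintype_card_le_finrank
    rw [Fintype.card_prod, Fintype.card_fin, Fintype.card_fin] at hcard
    have h2m : 2 * m ≤ (a + 1) * (b + 1) := by
      obtain ⟨a', ha'⟩ : ∃ a', a = a' + 1 := ⟨a - 1, by omega⟩
      obtain ⟨b', hb''⟩ : ∃ b', b = b' + 1 := ⟨b - 1, by omega⟩
      calc 2 * m = 2 * (a + b) := by omega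
        _ ≤ (a + 1) * (b + 1) := by rw [ha', hb'']; nlinarith
    linarith

/-- Lemma 2.5: if `2m > n` and `X`, `Y` are commuting nilpotent endomorphisms of an
`n`-dimensional space with `X^m = Y^m = 0`, then `Y^q X^p = 0` whenever `p + q = m`. -/
theorem stmt10 (F : Type*) [Field F]
    (V : Type*) [AddCommGroup V] [Module F V] [FiniteDimensional F V]
    (n : ℕ) (hn : n = Module.finrank F V)
    (m : ℕ) (hm0 : 1 ≤ m) (hm : 2 * m > n)
    (X Y : V →ₗ[F] V) (hc : Commute X Y)
    (hX : X ^ m = 0) (hY : Y ^ m = 0) :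
    ∀ p q : ℕ, p + q = m → Y ^ q * X ^ p = 0 :=
  key F (Module.finrank F V) V le_rfl m hm0 (by omega) X Y hc hX hY
end

section
/- Let F be an algebraically closed field and X an n×n matrix over F with additive Jordan decomposition X = X_s + X_n (X_s diagonalizable, X_n nilpotent, commuting). If M ⊆ M_n(F) is a set closed under conjugation by invertible matrices and such that for any two commuting elements of M their linear span lies in M, then X ∈ M implies X_s ∈ M and X_n ∈ M. -/
open Polynomial Module

section Key

variable {A : Type*} [CommRing A]

lemma myRelCompl {V : Type*} [AddCommGroup V] [Module A V] [IsSemisimpleModule A V]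
    (S U W : Submodule A V) (hSW : S ≤ W) (hUW : U ≤ W) (hSU : S ⊓ U = ⊥) :
    ∃ C : Submodule A V, S ≤ C ∧ C ⊓ U = ⊥ ∧ C ⊔ U = W := by
  obtain ⟨T, hT⟩ := exists_isCompl (S ⊔ U)
  refine ⟨(S ⊔ T) ⊓ W, le_inf le_sup_left hSW, ?_, ?_⟩
  · rw [eq_bot_iff]
    rintro x ⟨hx1, hxU⟩
    obtain ⟨hxST, hxW⟩ := hx1
    obtain ⟨s, hs, y, hy, rfl⟩ := Submodule.mem_sup.mp hxST
    have hyT0 : y = 0 := by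
      have hy' : y ∈ (S ⊔ U) ⊓ T := by
        constructor
        · have : (s + y) - s ∈ S ⊔ U :=
            Submodule.sub_mem _ (Submodule.mem_sup_right hxU) (Submodule.mem_sup_left hs)
          simpa using this
        · exact hy
      rw [hT.inf_eq_bot] at hy'
      simpa using hy'
    subst hyT0
    have : s + 0 ∈ S ⊓ U := ⟨by simpa using hs, hxU⟩
    rw [hSU] at this
    simpa using this
  · rw [sup_comm, ← sup_inf_assoc_of_le _ hUW, ← sup_assoc, sup_comm U S,
      hT.sup_eq_top, top_inf_eq]

universe v

lemma myKey (t : Aˣ) : ∀ (m : ℕ) {V : Type v} [AddCommGroup V] [Module A V]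
    [IsSemisimpleModule A V] (N : V →ₗ[A] V), N ^ m = 0 → ∀ S : Submodule A V,
    S ⊓ LinearMap.ker (N ^ (m - 1)) = ⊥ →
    ∃ h : V ≃ₗ[A] V, (∀ x, N (h x) = (t : A) • h (N x)) ∧
      (∀ x ∈ S, h x = ((t : A) ^ m) • x) := by
  intro m
  induction m with
  | zero =>
    intro V _ _ _ N hN S hS
    refine ⟨LinearEquiv.refl A V, fun x => ?_, fun x _ => by simp⟩
    have hx : ∀ y : V, y = 0 := fun y => by
      have : (N ^ 0) y = 0 := by rw [hN]; rfl
      simpa using this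
    simp [hx (N x), hx x]
  | succ m IH =>
    intro V _ _ _ N hN S hS
    set K : Submodule A V := LinearMap.ker (N ^ m) with hK
    have hNsucc : ∀ x : V, (N ^ (m + 1)) x = (N ^ m) (N x) := by
      intro x; rw [pow_succ]; rfl
    have hNK : ∀ x ∈ K, N x ∈ K := by
      intro x hx
      simp only [hK, LinearMap.mem_ker] at hx ⊢
      rw [← hNsucc, hN]; rfl
    have hSK : S ⊓ K = ⊥ := by simpa using hS
    obtain ⟨C, hSC, hCK, hCKtop⟩ := myRelCompl S K ⊤ le_top le_top hSK
    have hKC : IsCompl K C := ⟨by rw [disjoint_iff, inf_comm]; exact hCK,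
      by rw [codisjoint_iff, sup_comm]; exact hCKtop⟩
    set N' : K →ₗ[A] K := N.restrict hNK with hN'def
    have hrestrict := Module.End.pow_restrict (f' := N) m hNK
    have hN'm : N' ^ m = 0 := by
      ext x
      rw [hN'def, hrestrict]
      simp only [LinearMap.restrict_apply, LinearMap.zero_apply, ZeroMemClass.coe_zero]
      simpa using x.2
    set S' : Submodule A K := (Submodule.map N C).comap K.subtype with hS'def
    have hS'ker : S' ⊓ LinearMap.ker (N' ^ (m - 1)) = ⊥ := by
      rw [eq_bot_iff]
      rintro x ⟨hx1, hx2⟩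
      simp only [hS'def, Submodule.mem_comap, Submodule.mem_map] at hx1
      obtain ⟨c, hc, hcx⟩ := hx1
      simp only [SetLike.mem_coe, LinearMap.mem_ker] at hx2
      rcases m with _ | k
      · have hx0 : (x : V) ∈ LinearMap.ker (N ^ 0) := x.2
        simp only [pow_zero, LinearMap.mem_ker, Module.End.one_apply] at hx0
        simpa using Subtype.ext hx0
      · have hxker : (N ^ k) (x : V) = 0 := by
          have hr := Module.End.pow_restrict (f' := N) k hNK
          have h2 : (N' ^ (k + 1 - 1)) x = 0 := hx2
          rw [Nat.add_sub_cancel, hN'def, hr] at h2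
          simpa using congrArg Subtype.val h2
        have hcK : c ∈ K := by
          simp only [hK, LinearMap.mem_ker]
          have hmm : (N ^ (k + 1)) c = (N ^ k) (N c) := by
            rw [pow_succ, Module.End.mul_apply]
          rw [hmm, hcx, K.subtype_apply, hxker]
        have hc0 : c ∈ C ⊓ K := ⟨hc, hcK⟩
        rw [hCK] at hc0
        simp only [Submodule.mem_bot] at hc0
        subst hc0
        simp only [map_zero] at hcx
        have hx0 : (x : V) = 0 := by simpa using hcx.symm
        simpa using Subtype.ext hx0
    obtain ⟨h₀, hcomm₀, hscal₀⟩ := IH N' hN'm S' hS'ker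
    -- build h
    set eC : C ≃ₗ[A] C := LinearEquiv.smulOfUnit (t ^ (m + 1)) with heC
    set e := Submodule.prodEquivOfIsCompl K C hKC with he
    set h : V ≃ₗ[A] V := e.symm.trans ((h₀.prodCongr eC).trans e) with hh
    have happK : ∀ k : K, h (k : V) = (h₀ k : V) := by
      intro k
      rw [hh]
      simp only [LinearEquiv.trans_apply]
      rw [he, Submodule.prodEquivOfIsCompl_symm_apply_left]
      have : (h₀.prodCongr eC) (k, 0) = (h₀ k, 0) := by
        simp [LinearEquiv.prodCongr_apply]
      rw [this]
      simp [Submodule.coe_prodEquivOfIsCompl']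
    have happC : ∀ c : C, h (c : V) = ((t : A) ^ (m + 1)) • (c : V) := by
      intro c
      rw [hh]
      simp only [LinearEquiv.trans_apply]
      rw [he, Submodule.prodEquivOfIsCompl_symm_apply_right]
      have : (h₀.prodCongr eC) (0, c) = (0, eC c) := by
        simp [LinearEquiv.prodCongr_apply]
      rw [this]
      have heCc : (eC c : V) = ((t : A) ^ (m + 1)) • (c : V) := by
        rw [heC]
        simp [LinearEquiv.smulOfUnit, Units.smul_def, DistribMulAction.toLinearEquiv]
      simp [Submodule.coe_prodEquivOfIsCompl', heCc]
    have hNC_memK : ∀ c : C, N (c : V) ∈ K := by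
      intro c
      simp only [hK, LinearMap.mem_ker]
      rw [← hNsucc, hN]; rfl
    have hNC_memS' : ∀ c : C, (⟨N (c : V), hNC_memK c⟩ : K) ∈ S' := by
      intro c
      simp only [hS'def, Submodule.mem_comap, Submodule.mem_map]
      exact ⟨c, c.2, rfl⟩
    refine ⟨h, ?_, ?_⟩
    · -- commutation: suffices on K and C parts
      have main : ∀ x : V, N (h x) = (t : A) • h (N x) := by
        intro x
        have hxmem : x ∈ K ⊔ C := by rw [hKC.sup_eq_top]; trivial
        obtain ⟨k, hk, c, hc, rfl⟩ := Submodule.mem_sup.mp hxmem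
        simp only [map_add, smul_add]
        congr 1
        · -- k part
          rw [happK ⟨k, hk⟩]
          have hNk : N k = ((⟨N k, hNK k hk⟩ : K) : V) := rfl
          rw [hNk, happK ⟨N k, hNK k hk⟩]
          have h1 : N ((h₀ ⟨k, hk⟩ : K) : V) = ((N' (h₀ ⟨k, hk⟩) : K) : V) := by
            rw [hN'def]; simp [LinearMap.restrict_apply]
          rw [h1]
          have h2 : N' (h₀ ⟨k, hk⟩) = (t : A) • h₀ (N' ⟨k, hk⟩) := hcomm₀ ⟨k, hk⟩
          rw [h2]
          have h3 : N' (⟨k, hk⟩ : K) = ⟨N k, hNK k hk⟩ := by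
            rw [hN'def]; simp [LinearMap.restrict_apply]
          rw [h3]
          rfl
        · -- c part
          rw [happC ⟨c, hc⟩]
          simp only [map_smul]
          have hNc : N c = ((⟨N c, hNC_memK ⟨c, hc⟩⟩ : K) : V) := rfl
          rw [hNc, happK ⟨N c, hNC_memK ⟨c, hc⟩⟩]
          rw [hscal₀ _ (hNC_memS' ⟨c, hc⟩)]
          have : ((((t : A) ^ m) • (⟨N c, hNC_memK ⟨c, hc⟩⟩ : K) : K) : V)
              = ((t : A) ^ m) • N c := rfl
          rw [this, ← hNc, smul_smul, pow_succ']
      exact main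
    · intro x hxS
      have hxC : x ∈ C := hSC hxS
      rw [happC ⟨x, hxC⟩]

end Key

section EndV

variable {F : Type*} [Field F] {V : Type*} [AddCommGroup V] [Module F V]

lemma myEnd (f g : Module.End F V) (hf : f.IsSemisimple) (hfg : Commute f g)
    (m : ℕ) (hg : g ^ m = 0) (t : Fˣ) :
    ∃ h : V ≃ₗ[F] V, (∀ x, h (f x) = f (h x)) ∧ (∀ x, g (h x) = (t : F) • h (g x)) := by
  have hss : IsSemisimpleModule F[X] (AEval' f) := hf
  have hcomm : ∀ x : V, g (f x) = f (g x) := by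
    intro x
    have := LinearMap.congr_fun hfg.symm x
    simpa [Module.End.mul_apply] using this
  set N : AEval' f →ₗ[F[X]] AEval' f :=
    LinearMap.ofAEval f ((AEval'.of f).toLinearMap ∘ₗ g) (fun x => by
      simp only [LinearMap.comp_apply, LinearEquiv.coe_coe]
      rw [AEval'.X_smul_of]
      congr 1
      show g (f x) = f (g x)
      exact hcomm x) with hNdef
  have hNapp : ∀ x : V, N (AEval'.of f x) = AEval'.of f (g x) := by
    intro x
    simp [hNdef, LinearMap.ofAEval]
  have hNpow : ∀ (k : ℕ) (x : V), (N ^ k) (AEval'.of f x) = AEval'.of f ((g ^ k) x) := by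
    intro k
    induction k with
    | zero => intro x; simp
    | succ k ih =>
      intro x
      rw [pow_succ, Module.End.mul_apply, hNapp, ih, pow_succ, Module.End.mul_apply]
  have hNm : N ^ m = 0 := by
    ext x
    have := hNpow m ((AEval'.of f).symm x)
    simp only [LinearEquiv.apply_symm_apply] at this
    rw [this, hg]
    simp
  set t' : (F[X])ˣ := Units.map (algebraMap F F[X]).toMonoidHom t with ht'
  obtain ⟨h, hcommh, -⟩ := myKey t' m N hNm ⊥ (by simp)
  set h' : V ≃ₗ[F] V :=
    (AEval'.of f).trans ((h.restrictScalars F).trans (AEval'.of f).symm) with hh'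
  have hh'app : ∀ x : V, h' x = (AEval'.of f).symm (h (AEval'.of f x)) := fun x => rfl
  refine ⟨h', ?_, ?_⟩
  · intro x
    rw [hh'app, hh'app]
    calc (AEval'.of f).symm (h (AEval'.of f (f x)))
        = (AEval'.of f).symm (h ((X : F[X]) • AEval'.of f x)) := by
          rw [AEval'.X_smul_of]
      _ = (AEval'.of f).symm ((X : F[X]) • h (AEval'.of f x)) := by rw [map_smul]
      _ = f ((AEval'.of f).symm (h (AEval'.of f x))) := AEval'.of_symm_X_smul f _
  · intro x
    rw [hh'app, hh'app]
    have key := hcommh (AEval'.of f x)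
    have e1 : AEval'.of f (g ((AEval'.of f).symm (h (AEval'.of f x))))
        = N (h (AEval'.of f x)) := by
      rw [← hNapp ((AEval'.of f).symm (h (AEval'.of f x))), LinearEquiv.apply_symm_apply]
    calc g ((AEval'.of f).symm (h (AEval'.of f x)))
        = (AEval'.of f).symm (AEval'.of f (g ((AEval'.of f).symm (h (AEval'.of f x))))) := by
          rw [LinearEquiv.symm_apply_apply]
      _ = (AEval'.of f).symm (N (h (AEval'.of f x))) := by rw [e1]
      _ = (AEval'.of f).symm ((t' : F[X]) • h (N (AEval'.of f x))) := by rw [key]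
      _ = (AEval'.of f).symm ((t' : F[X]) • h (AEval'.of f (g x))) := by rw [hNapp]
      _ = (AEval'.of f).symm ((t : F) • h (AEval'.of f (g x))) := by
          rw [ht']
          show (AEval'.of f).symm ((algebraMap F F[X]) (t : F) • _) = _
          rw [Polynomial.algebraMap_eq, AEval.C_smul]
      _ = (t : F) • (AEval'.of f).symm (h (AEval'.of f (g x))) := by rw [map_smul]

end EndV

section MatrixV

variable {F : Type*} [Field F] {n : ℕ}

lemma myDiagSS (d : Fin n → F) :
    Module.End.IsSemisimple
      (Matrix.toLinAlgEquiv' (Matrix.diagonal d) : Module.End F (Fin n → F)) := by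
  classical
  set p : F[X] := ∏ a ∈ Finset.univ.image d, (X - C a) with hp
  have hsf : Squarefree p := by
    have : p.Separable := by
      rw [hp]
      exact Polynomial.separable_prod_X_sub_C_iff'.mpr (fun i _ j _ h => h)
    exact this.squarefree
  apply Module.End.isSemisimple_of_squarefree_aeval_eq_zero hsf
  have h1 : aeval (Matrix.toLinAlgEquiv' (Matrix.diagonal d)) p =
      Matrix.toLinAlgEquiv'.toAlgHom (aeval (Matrix.diagonal d) p) :=
    (Polynomial.aeval_algHom_apply Matrix.toLinAlgEquiv'.toAlgHom (Matrix.diagonal d) p)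
  have h2 : aeval (Matrix.diagonal d) p = 0 := by
    have hd : Matrix.diagonal d = (Matrix.diagonalAlgHom F : (Fin n → F) →ₐ[F] Matrix (Fin n) (Fin n) F) d := rfl
    rw [hd, Polynomial.aeval_algHom_apply]
    have h3 : aeval d p = 0 := by
      funext i
      have h4 : (aeval d p) i = aeval (d i) p :=
        (Polynomial.aeval_algHom_apply (Pi.evalAlgHom F (fun _ : Fin n => F) i) d p).symm
      rw [Pi.zero_apply, h4, hp, map_prod]
      apply Finset.prod_eq_zero (Finset.mem_image_of_mem d (Finset.mem_univ i))
      simp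
    rw [h3, map_zero]
  rw [h1, h2, map_zero]

lemma myMatrix (d : Fin n → F) (Nm : Matrix (Fin n) (Fin n) F) (t : Fˣ)
    (hc : Commute (Matrix.diagonal d) Nm) (m : ℕ) (hm : Nm ^ m = 0) :
    ∃ u : (Matrix (Fin n) (Fin n) F)ˣ,
      (u : Matrix (Fin n) (Fin n) F) * Matrix.diagonal d =
        Matrix.diagonal d * (u : Matrix (Fin n) (Fin n) F) ∧
      Nm * (u : Matrix (Fin n) (Fin n) F) =
        (t : F) • ((u : Matrix (Fin n) (Fin n) F) * Nm) := by
  set φ := (Matrix.toLinAlgEquiv' : Matrix (Fin n) (Fin n) F ≃ₐ[F] _) with hφ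
  set f := φ (Matrix.diagonal d) with hf
  set g := φ Nm with hg
  have hfg : Commute f g := hc.map φ
  have hgm : g ^ m = 0 := by rw [hg, ← map_pow, hm, map_zero]
  obtain ⟨h, hcf, hcg⟩ := myEnd f g (myDiagSS d) hfg m hgm t
  have hfh : h.toLinearMap * f = f * h.toLinearMap := by
    refine LinearMap.ext fun x => ?_
    simp only [Module.End.mul_apply, LinearEquiv.coe_coe]
    exact hcf x
  have hgh : g * h.toLinearMap = (t : F) • (h.toLinearMap * g) := by
    refine LinearMap.ext fun x => ?_
    simp only [Module.End.mul_apply, LinearMap.smul_apply, LinearEquiv.coe_coe]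
    exact hcg x
  have hinv1 : h.toLinearMap * h.symm.toLinearMap = 1 := by
    refine LinearMap.ext fun x => ?_
    simp [Module.End.mul_apply]
  have hinv2 : h.symm.toLinearMap * h.toLinearMap = 1 := by
    refine LinearMap.ext fun x => ?_
    simp [Module.End.mul_apply]
  refine ⟨⟨φ.symm h.toLinearMap, φ.symm h.symm.toLinearMap, ?_, ?_⟩, ?_, ?_⟩
  · rw [← map_mul, hinv1, map_one]
  · rw [← map_mul, hinv2, map_one]
  · show φ.symm h.toLinearMap * Matrix.diagonal d = Matrix.diagonal d * φ.symm h.toLinearMap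
    have : Matrix.diagonal d = φ.symm f := by rw [hf, AlgEquiv.symm_apply_apply]
    rw [this, ← map_mul, ← map_mul, hfh]
  · show Nm * φ.symm h.toLinearMap = (t : F) • (φ.symm h.toLinearMap * Nm)
    have : Nm = φ.symm g := by rw [hg, AlgEquiv.symm_apply_apply]
    rw [this, ← map_mul, ← map_mul, hgh, map_smul]

end MatrixV

/-- Lemma 1.1: if `M ⊆ M_n(F)` (F algebraically closed) is invariant under conjugation
and contains the linear span of each two of its commuting elements, then for
`X = X_s + X_n` (Jordan decomposition: `X_s` diagonalizable, `X_n` nilpotent,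
commuting), `X ∈ M` implies `X_s ∈ M` and `X_n ∈ M`. -/
theorem stmt13 (F : Type*) [Field F] [IsAlgClosed F] (n : ℕ)
    (M : Set (Matrix (Fin n) (Fin n) F))
    (hconj : ∀ g : (Matrix (Fin n) (Fin n) F)ˣ, ∀ A ∈ M,
      (g : Matrix (Fin n) (Fin n) F) * A *
        ((g⁻¹ : (Matrix (Fin n) (Fin n) F)ˣ) : Matrix (Fin n) (Fin n) F) ∈ M)
    (hspan : ∀ A ∈ M, ∀ B ∈ M, Commute A B → ∀ a b : F, a • A + b • B ∈ M)
    (X Xs Xn : Matrix (Fin n) (Fin n) F)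
    (hsum : X = Xs + Xn)
    (hXs : ∃ (g : (Matrix (Fin n) (Fin n) F)ˣ) (d : Fin n → F),
      Xs = (g : Matrix (Fin n) (Fin n) F) * Matrix.diagonal d *
        ((g⁻¹ : (Matrix (Fin n) (Fin n) F)ˣ) : Matrix (Fin n) (Fin n) F))
    (hXn : IsNilpotent Xn) (hcomm : Commute Xs Xn)
    (hXM : X ∈ M) :
    Xs ∈ M ∧ Xn ∈ M := by
  classical
  obtain ⟨g, d, hXsEq⟩ := hXs
  obtain ⟨m, hm⟩ := hXn
  set D : Matrix (Fin n) (Fin n) F := Matrix.diagonal d with hD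
  set N0 : Matrix (Fin n) (Fin n) F :=
    (↑g⁻¹ : Matrix (Fin n) (Fin n) F) * Xn * (↑g : Matrix (Fin n) (Fin n) F) with hN0
  have hmul : ∀ A B : Matrix (Fin n) (Fin n) F,
      ((↑g⁻¹ : Matrix (Fin n) (Fin n) F) * A * (↑g : Matrix (Fin n) (Fin n) F)) * ((↑g⁻¹ : Matrix (Fin n) (Fin n) F) * B * (↑g : Matrix (Fin n) (Fin n) F))
        = (↑g⁻¹ : Matrix (Fin n) (Fin n) F) * (A * B) * (↑g : Matrix (Fin n) (Fin n) F) := by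
    intro A B
    simp only [mul_assoc]
    rw [Units.mul_inv_cancel_left]
  have hgD : (↑g⁻¹ : Matrix (Fin n) (Fin n) F) * Xs * (↑g : Matrix (Fin n) (Fin n) F) = D := by
    rw [hXsEq]
    simp only [← mul_assoc]
    rw [Units.inv_mul]
    simp only [one_mul, mul_assoc]
    rw [Units.inv_mul, mul_one]
  have hB : (↑g⁻¹ : Matrix (Fin n) (Fin n) F) * X * (↑g : Matrix (Fin n) (Fin n) F) ∈ M := by
    have := hconj g⁻¹ X hXM
    rwa [inv_inv] at this
  have hBeq : (↑g⁻¹ : Matrix (Fin n) (Fin n) F) * X * (↑g : Matrix (Fin n) (Fin n) F) = D + N0 := by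
    rw [hsum, mul_add, add_mul, hgD, hN0]
  rw [hBeq] at hB
  have hcomm0 : Commute D N0 := by
    unfold Commute SemiconjBy
    rw [← hgD, hN0, hmul, hmul, hcomm.eq]
  have hNpow : N0 ^ m = 0 := by
    rw [hN0, Units.conj_pow', hm, mul_zero, zero_mul]
  obtain ⟨t, ht⟩ := Infinite.exists_notMem_finset ({0, 1} : Finset F)
  simp only [Finset.mem_insert, Finset.mem_singleton, not_or] at ht
  obtain ⟨ht0, ht1⟩ := ht
  obtain ⟨u, hu1, hu2⟩ := myMatrix d N0 (Units.mk0 t ht0) hcomm0 m hNpow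
  simp only [Units.val_mk0] at hu2
  have hB' : D + t • N0 ∈ M := by
    have hmem := hconj u⁻¹ (D + N0) hB
    rw [inv_inv] at hmem
    have heq : (↑u⁻¹ : Matrix (Fin n) (Fin n) F) * (D + N0) * (↑u : Matrix (Fin n) (Fin n) F) = D + t • N0 := by
      rw [mul_add, add_mul]
      congr 1
      · rw [mul_assoc, ← hu1, Units.inv_mul_cancel_left]
      · rw [mul_assoc, hu2, mul_smul_comm, Units.inv_mul_cancel_left]
    rwa [heq] at hmem
  have cBB' : Commute (D + N0) (D + t • N0) :=
    ((Commute.refl D).add_right (hcomm0.smul_right t)).add_left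
      ((hcomm0.symm).add_right ((Commute.refl N0).smul_right t))
  have htm1 : t - 1 ≠ 0 := sub_ne_zero.mpr ht1
  have hDM : D ∈ M := by
    have hmem := hspan _ hB _ hB' cBB' (1 + (t - 1)⁻¹) (-(t - 1)⁻¹)
    have heq : (1 + (t - 1)⁻¹) • (D + N0) + (-(t - 1)⁻¹) • (D + t • N0) = D := by
      match_scalars <;> (field_simp; try ring)
    rwa [heq] at hmem
  have hNM : N0 ∈ M := by
    have cBD : Commute (D + N0) D := (Commute.refl D).add_left hcomm0.symm
    have hmem := hspan _ hB _ hDM cBD 1 (-1)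
    have heq : (1 : F) • (D + N0) + (-1 : F) • D = N0 := by module
    rwa [heq] at hmem
  constructor
  · rw [hXsEq]
    exact hconj g D hDM
  · have hmem := hconj g N0 hNM
    have heq : (↑g : Matrix (Fin n) (Fin n) F) * N0 * (↑g⁻¹ : Matrix (Fin n) (Fin n) F) = Xn := by
      rw [hN0]
      simp only [← mul_assoc]
      rw [Units.mul_inv]
      simp only [one_mul, mul_assoc]
      rw [Units.mul_inv, mul_one]
    rwa [heq] at hmem
end

section
/- Let F be an algebraically closed field, n ≥ 1, and X a nilpotent n×n matrix. For any k ≥ 2, the matrix X + X^k is similar to X. -/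
open Polynomial Module
open scoped DirectSum

section Aux

variable (F : Type*) [Field F]

/-- smul by `X^r` as an `F`-linear map. -/
noncomputable def smulX (r : ℕ) (M : Type*) [AddCommGroup M] [Module F M] [Module F[X] M]
    [IsScalarTower F F[X] M] : M →ₗ[F] M where
  toFun m := (X : F[X]) ^ r • m
  map_add' _ _ := smul_add _ _ _
  map_smul' c m := (smul_comm c ((X : F[X]) ^ r) m).symm

lemma smulX_apply (r : ℕ) {M : Type*} [AddCommGroup M] [Module F M] [Module F[X] M]
    [IsScalarTower F F[X] M] (m : M) : smulX F r M m = (X : F[X]) ^ r • m := rfl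

/-- The model module `F[X]/(X^e)`. -/
noncomputable abbrev Qe (e : ℕ) := F[X] ⧸ Submodule.span F[X] {(X : F[X]) ^ e}

lemma finrank_Qe (e : ℕ) : Module.finrank F (Qe F e) = e := by
  have h : ((X : F[X]) ^ e) ≠ 0 := pow_ne_zero _ X_ne_zero
  have := (AdjoinRoot.powerBasis h).finrank
  have h2 : Module.finrank F (AdjoinRoot ((X : F[X]) ^ e)) = e := by
    simpa [AdjoinRoot.powerBasis, natDegree_X_pow] using this
  exact h2

instance (e : ℕ) : FiniteDimensional F (Qe F e) :=
  Module.Finite.of_basis (AdjoinRoot.powerBasis (pow_ne_zero e (X_ne_zero (R := F)))).basis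

instance : Subsingleton (Qe F 0) := by
  rw [Submodule.Quotient.subsingleton_iff, pow_zero]
  exact Ideal.span_singleton_one

lemma range_smulX_Qe (r e : ℕ) :
    LinearMap.range (smulX F r (Qe F e)) =
      (Submodule.span F[X] {(Submodule.Quotient.mk ((X:F[X])^r) : Qe F e)}).restrictScalars F := by
  ext y
  simp only [LinearMap.mem_range, Submodule.restrictScalars_mem, Submodule.mem_span_singleton]
  constructor
  · rintro ⟨m, rfl⟩
    obtain ⟨p, rfl⟩ := Submodule.Quotient.mk_surjective _ m
    exact ⟨p, by rw [smulX_apply, ← Submodule.Quotient.mk_smul, ← Submodule.Quotient.mk_smul,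
      smul_eq_mul, smul_eq_mul, mul_comm]⟩
  · rintro ⟨p, rfl⟩
    exact ⟨Submodule.Quotient.mk p, by rw [smulX_apply, ← Submodule.Quotient.mk_smul,
      ← Submodule.Quotient.mk_smul, smul_eq_mul, smul_eq_mul, mul_comm]⟩

lemma rho_Qe (r e : ℕ) :
    Module.finrank F (LinearMap.range (smulX F r (Qe F e))) + min r e = e := by
  set m := min r e with hm
  have hST : Submodule.span F[X] {(X:F[X])^e} ≤ Submodule.span F[X] {(X:F[X])^m} := by
    rw [Submodule.span_singleton_le_iff_mem, Submodule.mem_span_singleton]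
    exact ⟨X ^ (e - m), by rw [smul_eq_mul, ← pow_add]; congr 1; omega⟩
  have hmap : Submodule.map (Submodule.span F[X] {(X:F[X])^e}).mkQ
      (Submodule.span F[X] {(X:F[X])^m}) =
      Submodule.span F[X] {(Submodule.Quotient.mk ((X:F[X])^r) : Qe F e)} := by
    rw [Submodule.map_span, Set.image_singleton]
    rcases le_or_gt r e with h | h
    · have : m = r := by omega
      rw [this]; rfl
    · have hme : m = e := by omega
      have h1 : ((Submodule.span F[X] {(X:F[X])^e}).mkQ ((X:F[X])^m) : Qe F e) = 0 := by
        rw [hme, Submodule.mkQ_apply, Submodule.Quotient.mk_eq_zero]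
        exact Submodule.mem_span_singleton_self _
      have h2 : ((Submodule.Quotient.mk ((X:F[X])^r) : Qe F e)) = 0 := by
        rw [Submodule.Quotient.mk_eq_zero, Submodule.mem_span_singleton]
        exact ⟨X ^ (r - e), by rw [smul_eq_mul, ← pow_add]; congr 1; omega⟩
      rw [h1, h2]
  have equiv1 := Submodule.quotientQuotientEquivQuotient _ _ hST
  rw [hmap] at equiv1
  have key := Submodule.finrank_quotient_add_finrank
    (LinearMap.range (smulX F r (Qe F e)))
  rw [range_smulX_Qe] at key ⊢
  have hq : Module.finrank F
      (Qe F e ⧸ (Submodule.span F[X] {(Submodule.Quotient.mk ((X:F[X])^r) : Qe F e)}).restrictScalars F) = m := by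
    have e2 := (Submodule.Quotient.restrictScalarsEquiv F
      (Submodule.span F[X] {(Submodule.Quotient.mk ((X:F[X])^r) : Qe F e)})).trans
      (LinearEquiv.restrictScalars F equiv1)
    rw [e2.finrank_eq]
    exact finrank_Qe F m
  rw [hq] at key
  have := finrank_Qe F e
  omega

/-- Transport the invariant along an `F[X]`-linear equivalence. -/
lemma rho_congr (r : ℕ) {M N : Type*} [AddCommGroup M] [Module F M] [Module F[X] M]
    [IsScalarTower F F[X] M] [AddCommGroup N] [Module F N] [Module F[X] N]
    [IsScalarTower F F[X] N] (ψ : M ≃ₗ[F[X]] N) :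
    Module.finrank F (LinearMap.range (smulX F r M)) =
      Module.finrank F (LinearMap.range (smulX F r N)) := by
  let φ := ψ.restrictScalars F
  have hcomm : smulX F r N ∘ₗ (φ : M →ₗ[F] N) = (φ : M →ₗ[F] N) ∘ₗ smulX F r M := by
    ext m
    simp [smulX_apply, φ, map_smul]
  have h1 : LinearMap.range (smulX F r N) =
      Submodule.map (φ : M →ₗ[F] N) (LinearMap.range (smulX F r M)) := by
    rw [← LinearMap.range_comp, ← hcomm, LinearMap.range_comp_of_range_eq_top]
    exact LinearEquiv.range φ
  rw [h1, LinearEquiv.finrank_map_eq]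

lemma rho_pi (r : ℕ) {ι : Type*} [Fintype ι] (W : ι → Type*) [∀ i, AddCommGroup (W i)]
    [∀ i, Module F (W i)] [∀ i, Module F[X] (W i)] [∀ i, IsScalarTower F F[X] (W i)]
    [∀ i, FiniteDimensional F (W i)] :
    Module.finrank F (LinearMap.range (smulX F r (∀ i, W i))) =
      ∑ i, Module.finrank F (LinearMap.range (smulX F r (W i))) := by
  classical
  set G := smulX F r (∀ i, W i)
  set θ : (∀ i, W i) →ₗ[F] ∀ i, LinearMap.range (smulX F r (W i)) :=
    LinearMap.pi fun i => (smulX F r (W i)).rangeRestrict ∘ₗ LinearMap.proj i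
  have hGv : ∀ (v : ∀ i, W i) (i : ι), G v i = smulX F r (W i) (v i) := fun v i => rfl
  have hker : LinearMap.ker G = LinearMap.ker θ := by
    ext v
    simp only [LinearMap.mem_ker]
    constructor
    · intro h
      funext i
      have : G v i = 0 := by rw [h]; rfl
      rw [hGv] at this
      exact Subtype.ext this
    · intro h
      funext i
      rw [hGv]
      have : θ v i = 0 := by rw [h]; rfl
      exact congrArg Subtype.val this
  have hθ : LinearMap.range θ = ⊤ := by
    rw [LinearMap.range_eq_top]
    intro y
    have : ∀ i, ∃ w : W i, smulX F r (W i) w = (y i : W i) := fun i => (y i).2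
    choose w hw using this
    exact ⟨w, funext fun i => Subtype.ext (hw i)⟩
  have e1 := LinearMap.finrank_range_add_finrank_ker G
  have e2 := LinearMap.finrank_range_add_finrank_ker θ
  rw [hker] at e1
  rw [hθ] at e2
  have e3 : Module.finrank F (⊤ : Submodule F (∀ i, LinearMap.range (smulX F r (W i)))) =
      ∑ i, Module.finrank F (LinearMap.range (smulX F r (W i))) := by
    rw [finrank_top, Module.finrank_pi_fintype]
  omega

/-- Pi over a subtype when the other components are trivial. -/
noncomputable def piSubtypeEquiv {R : Type*} [Semiring R] {ι : Type*} (W : ι → Type*)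
    [∀ i, AddCommGroup (W i)] [∀ i, Module R (W i)] (p : ι → Prop) [DecidablePred p]
    (hW : ∀ i, ¬ p i → Subsingleton (W i)) : (∀ i, W i) ≃ₗ[R] ∀ i : {i // p i}, W ↑i where
  toFun v a := v ↑a
  map_add' _ _ := rfl
  map_smul' _ _ := rfl
  invFun w i := if h : p i then w ⟨i, h⟩ else 0
  left_inv v := by
    funext i
    by_cases h : p i
    · simp [h]
    · have := hW i h
      exact Subsingleton.elim _ _
  right_inv w := by
    funext a
    simp [a.2]

noncomputable def QeCongr {a b : ℕ} (h : a = b) : Qe F a ≃ₗ[F[X]] Qe F b :=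
  h ▸ LinearEquiv.refl _ _

lemma rho_aeval {M : Type*} [AddCommGroup M] [Module F M] (f : M →ₗ[F] M) (r : ℕ) :
    Module.finrank F (LinearMap.range (smulX F r (Module.AEval' f))) =
      Module.finrank F (LinearMap.range (f ^ r)) := by
  have hfun : smulX F r (Module.AEval' f) =
      (Module.AEval.of F M f).toLinearMap ∘ₗ ((f ^ r) ∘ₗ
        (Module.AEval.of F M f).symm.toLinearMap) := by
    ext m
    simp only [LinearMap.comp_apply, LinearEquiv.coe_coe]
    apply (Module.AEval.of F M f).symm.injective
    rw [smulX_apply, Module.AEval.of_symm_smul, aeval_X_pow, LinearEquiv.symm_apply_apply]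
    rfl
  rw [hfun, LinearMap.range_comp, LinearMap.range_comp_of_range_eq_top,
    LinearEquiv.finrank_map_eq]
  exact LinearEquiv.range _

end Aux

section Comb

lemma sum_min_succ {ι : Type*} [Fintype ι] (e : ι → ℕ) (r : ℕ) :
    ∑ i, min (r+1) (e i) = ∑ i, min r (e i) + Fintype.card {i // r + 1 ≤ e i} := by
  classical
  rw [Fintype.card_subtype, Finset.card_eq_sum_ones, Finset.sum_filter, ← Finset.sum_add_distrib]
  apply Finset.sum_congr rfl
  intro i _
  by_cases h : r + 1 ≤ e i <;> simp [h] <;> omega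

lemma card_ge_eq_of_sum_min_eq {ι ι' : Type*} [Fintype ι] [Fintype ι'] (e : ι → ℕ) (d : ι' → ℕ)
    (h : ∀ r, ∑ i, min r (e i) = ∑ j, min r (d j)) (r : ℕ) :
    Fintype.card {i // r + 1 ≤ e i} = Fintype.card {j // r + 1 ≤ d j} := by
  have h1 := sum_min_succ e r
  have h2 := sum_min_succ d r
  have := h r
  have := h (r+1)
  omega

lemma card_eq_eq {ι : Type*} [Fintype ι] (e : ι → ℕ) (v : ℕ) :
    Fintype.card {i // v + 1 ≤ e i} =
      Fintype.card {i // e i = v + 1} + Fintype.card {i // v + 1 + 1 ≤ e i} := by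
  classical
  simp only [Fintype.card_subtype]
  rw [← Finset.card_union_of_disjoint]
  · congr 1
    ext i
    simp only [Finset.mem_filter, Finset.mem_union, Finset.mem_univ, true_and]
    omega
  · rw [Finset.disjoint_filter]
    intro i _ h1
    omega

lemma exists_matching {α β : Type*} [Fintype α] [Fintype β] (e : α → ℕ) (d : β → ℕ)
    (h : ∀ v, Fintype.card {a // e a = v} = Fintype.card {b // d b = v}) :
    ∃ σ : α ≃ β, ∀ a, d (σ a) = e a := by
  let ψ := fun v => Fintype.equivOfCardEq (h v)
  refine ⟨(Equiv.sigmaFiberEquiv e).symm.trans ((Equiv.sigmaCongrRight ψ).trans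
    (Equiv.sigmaFiberEquiv d)), fun a => ?_⟩
  simp only [Equiv.trans_apply]
  set x := (Equiv.sigmaFiberEquiv e).symm a with hx
  have hx1 : x.1 = e a := by
    have : (Equiv.sigmaFiberEquiv e) x = a := Equiv.apply_symm_apply _ _
    rw [← this]
    exact (x.2.2).symm
  have : (Equiv.sigmaCongrRight ψ) x = ⟨x.1, ψ x.1 x.2⟩ := rfl
  rw [this]
  show d ((ψ x.1 x.2 : {b // d b = x.1}) : β) = e a
  rw [(ψ x.1 x.2).2, hx1]

lemma exists_matching_pos {α β : Type*} [Fintype α] [Fintype β] (e : α → ℕ) (d : β → ℕ)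
    (h : ∀ r, ∑ i, min r (e i) = ∑ j, min r (d j)) :
    ∃ σ : {a // e a ≠ 0} ≃ {b // d b ≠ 0}, ∀ a, d (σ a) = e ↑a := by
  classical
  have hge : ∀ r, Fintype.card {i // r + 1 ≤ e i} = Fintype.card {j // r + 1 ≤ d j} :=
    card_ge_eq_of_sum_min_eq e d h
  have hfib : ∀ v, Fintype.card {i // e i = v + 1} = Fintype.card {j // d j = v + 1} := by
    intro v
    have h1 := card_eq_eq e v
    have h2 := card_eq_eq d v
    have h3 := hge v
    have h4 := hge (v+1)
    omega
  have key : ∀ v, Fintype.card {a : {a // e a ≠ 0} // e ↑a = v} =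
      Fintype.card {b : {b // d b ≠ 0} // d ↑b = v} := by
    intro v
    match v with
    | 0 =>
      rw [Fintype.card_eq_zero_iff.2, Fintype.card_eq_zero_iff.2]
      · exact ⟨fun b => b.1.2 b.2⟩
      · exact ⟨fun a => a.1.2 a.2⟩
    | v + 1 =>
      have he : Fintype.card {a : {a // e a ≠ 0} // e ↑a = v + 1} =
          Fintype.card {i // e i = v + 1} := by
        apply Fintype.card_congr
        exact (Equiv.subtypeSubtypeEquivSubtypeInter (fun i => e i ≠ 0)
            (fun i => e i = v + 1)).trans
          (Equiv.subtypeEquivRight (fun i => ⟨And.right, fun h => ⟨by omega, h⟩⟩))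
      have hd : Fintype.card {b : {b // d b ≠ 0} // d ↑b = v + 1} =
          Fintype.card {j // d j = v + 1} := by
        apply Fintype.card_congr
        exact (Equiv.subtypeSubtypeEquivSubtypeInter (fun j => d j ≠ 0)
            (fun j => d j = v + 1)).trans
          (Equiv.subtypeEquivRight (fun i => ⟨And.right, fun h => ⟨by omega, h⟩⟩))
      rw [he, hd, hfib]
  obtain ⟨σ, hσ⟩ := exists_matching (fun a : {a // e a ≠ 0} => e ↑a)
    (fun b : {b // d b ≠ 0} => d ↑b) key
  exact ⟨σ, hσ⟩

end Comb

section Decomp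

universe u

lemma aeval_decomp {M : Type u} {F : Type u} [Field F] [AddCommGroup M] [Module F M]
    [FiniteDimensional F M] (f : M →ₗ[F] M) (hf : IsNilpotent f) :
    ∃ (ι : Type u) (_ : Fintype ι) (e : ι → ℕ),
      Nonempty (Module.AEval' f ≃ₗ[F[X]] ∀ i, Qe F (e i)) := by
  obtain ⟨m, hm⟩ := hf
  have htor : Module.IsTorsion F[X] (Module.AEval' f) := by
    intro x
    refine ⟨⟨(X : F[X])^m, mem_nonZeroDivisors_of_ne_zero (pow_ne_zero _ X_ne_zero)⟩, ?_⟩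
    show ((X : F[X])^m) • x = 0
    have : ((X : F[X])^m) • x = Module.AEval.of F M f (aeval f ((X:F[X])^m) •
        (Module.AEval.of F M f).symm x) := by
      rw [Module.AEval.of_aeval_smul]
      simp
    rw [this, aeval_X_pow, hm]
    simp
  obtain ⟨ι, hfin, p, hp, e, ⟨ψ⟩⟩ := Module.equiv_directSum_of_isTorsion htor
  refine ⟨ι, hfin, e, ?_⟩
  have hspan : ∀ i, Submodule.span F[X] {p i ^ e i} = Submodule.span F[X] {(X:F[X]) ^ e i} := by
    intro i
    rcases Nat.eq_zero_or_pos (e i) with h0 | hpos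
    · rw [h0, pow_zero, pow_zero]
    · have hann : ((X:F[X])^m) • (Submodule.Quotient.mk (1:F[X]) :
          F[X] ⧸ Submodule.span F[X] {p i ^ e i}) = 0 := by
        classical
        have hy : ((X:F[X])^m) • (DirectSum.lof F[X] ι
            (fun j => F[X] ⧸ Submodule.span F[X] {p j ^ e j}) i
            (Submodule.Quotient.mk 1)) = 0 := by
          obtain ⟨x, hx⟩ := ψ.surjective (DirectSum.lof F[X] ι
            (fun j => F[X] ⧸ Submodule.span F[X] {p j ^ e j}) i (Submodule.Quotient.mk 1))
          have hx0 : ((X : F[X])^m) • x = 0 := by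
            have : ((X : F[X])^m) • x = Module.AEval.of F M f (aeval f ((X:F[X])^m) •
                (Module.AEval.of F M f).symm x) := by
              rw [Module.AEval.of_aeval_smul]; simp
            rw [this, aeval_X_pow, hm]; simp
          rw [← hx, ← map_smul, hx0, map_zero]
        rw [← map_smul] at hy
        have h2 := congrArg (fun z => z i) hy
        simp only [DirectSum.lof_apply, DirectSum.zero_apply] at h2
        exact h2
      rw [← Submodule.Quotient.mk_smul, smul_eq_mul, mul_one,
        Submodule.Quotient.mk_eq_zero, Submodule.mem_span_singleton] at hann
      obtain ⟨q, hq⟩ := hann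
      have hdvd : p i ∣ (X:F[X])^m := by
        refine dvd_trans ?_ ⟨q, by rw [← hq, smul_eq_mul, mul_comm]⟩
        exact dvd_pow_self (p i) (Nat.pos_iff_ne_zero.mp hpos)
      have hassoc : Associated (p i) (X : F[X]) :=
        (hp i).associated_of_dvd irreducible_X ((hp i).prime.dvd_of_dvd_pow hdvd)
      have : Associated (p i ^ e i) ((X:F[X]) ^ e i) := hassoc.pow_pow
      exact Ideal.span_singleton_eq_span_singleton.2 this
  exact ⟨ψ.trans (((DFinsupp.mapRange.linearEquiv fun i =>
      Submodule.quotEquivOfEq _ _ (hspan i))).trans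
    (DirectSum.linearEquivFunOnFintype F[X] ι _))⟩

/-- Two nilpotent endomorphisms whose powers have equal ranks give isomorphic
`F[X]`-module structures. -/
lemma aeval_equiv_of_rank_eq {M : Type u} {F : Type u} [Field F] [AddCommGroup M] [Module F M]
    [FiniteDimensional F M] (f f' : M →ₗ[F] M) (hf : IsNilpotent f) (hf' : IsNilpotent f')
    (hrank : ∀ r, Module.finrank F (LinearMap.range (f ^ r)) =
      Module.finrank F (LinearMap.range (f' ^ r))) :
    Nonempty (Module.AEval' f ≃ₗ[F[X]] Module.AEval' f') := by
  classical
  obtain ⟨ι, hι, e, ⟨ψ⟩⟩ := aeval_decomp f hf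
  obtain ⟨ι', hι', d, ⟨ψ'⟩⟩ := aeval_decomp f' hf'
  have key_e : ∀ r, Module.finrank F (LinearMap.range (f ^ r)) + ∑ i, min r (e i) = ∑ i, e i := by
    intro r
    have h3 := rho_congr F r ψ
    rw [rho_aeval] at h3
    rw [rho_pi F r (fun i => Qe F (e i))] at h3
    rw [h3, ← Finset.sum_add_distrib]
    exact Finset.sum_congr rfl fun i _ => rho_Qe F r (e i)
  have key_d : ∀ r, Module.finrank F (LinearMap.range (f' ^ r)) + ∑ j, min r (d j) = ∑ j, d j := by
    intro r
    have h3 := rho_congr F r ψ'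
    rw [rho_aeval] at h3
    rw [rho_pi F r (fun j => Qe F (d j))] at h3
    rw [h3, ← Finset.sum_add_distrib]
    exact Finset.sum_congr rfl fun j _ => rho_Qe F r (d j)
  have hsum_ed : ∑ i, e i = ∑ j, d j := by
    have h1 : Module.finrank F (Module.AEval' f) = ∑ i, e i := by
      rw [(ψ.restrictScalars F).finrank_eq, Module.finrank_pi_fintype]
      exact Finset.sum_congr rfl fun i _ => finrank_Qe F (e i)
    have h2 : Module.finrank F (Module.AEval' f') = ∑ j, d j := by
      rw [(ψ'.restrictScalars F).finrank_eq, Module.finrank_pi_fintype]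
      exact Finset.sum_congr rfl fun j _ => finrank_Qe F (d j)
    have h3 : Module.finrank F (Module.AEval' f) = Module.finrank F (Module.AEval' f') := by
      rw [(Module.AEval.of F M f).symm.finrank_eq, (Module.AEval.of F M f').symm.finrank_eq]
    rw [← h1, ← h2, h3]
  have hsum : ∀ r, ∑ i, min r (e i) = ∑ j, min r (d j) := by
    intro r
    have h1 := key_e r
    have h2 := key_d r
    have h3 := hrank r
    omega
  obtain ⟨σ, hσ⟩ := exists_matching_pos e d hsum
  have hsub_e : ∀ i, ¬ (e i ≠ 0) → Subsingleton (Qe F (e i)) := by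
    intro i hi
    rw [not_ne_iff] at hi
    rw [hi]
    infer_instance
  have hsub_d : ∀ j, ¬ (d j ≠ 0) → Subsingleton (Qe F (d j)) := by
    intro j hj
    rw [not_ne_iff] at hj
    rw [hj]
    infer_instance
  let E1 := piSubtypeEquiv (R := F[X]) (fun i => Qe F (e i)) (fun i => e i ≠ 0) hsub_e
  let E4 := piSubtypeEquiv (R := F[X]) (fun j => Qe F (d j)) (fun j => d j ≠ 0) hsub_d
  let E2 := LinearEquiv.piCongrLeft' F[X] (fun a : {i // e i ≠ 0} => Qe F (e ↑a)) σ
  let E3 := LinearEquiv.piCongrRight fun b : {b // d b ≠ 0} => QeCongr F (show e ↑(σ.symm b) = d ↑b by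
    rw [← hσ (σ.symm b), Equiv.apply_symm_apply])
  exact ⟨ψ.trans (E1.trans (E2.trans (E3.trans (E4.symm.trans ψ'.symm))))⟩

end Decomp

lemma toLin'_pow {F : Type*} [Field F] {n : ℕ} (A : Matrix (Fin n) (Fin n) F) (r : ℕ) :
    Matrix.toLin' (A ^ r) = (Matrix.toLin' A) ^ r := by
  induction r with
  | zero => rw [pow_zero, pow_zero, Matrix.toLin'_one]; rfl
  | succ r ih => rw [pow_succ, pow_succ, Matrix.toLin'_mul, ih]; rfl

/-- For a nilpotent `n × n` matrix `X` over an algebraically closed field and any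
`k ≥ 2`, the matrix `X + X^k` is similar to `X`. -/
theorem stmt16 (F : Type*) [Field F] [IsAlgClosed F] (n : ℕ) (hn : 1 ≤ n)
    (X : Matrix (Fin n) (Fin n) F) (hX : IsNilpotent X) (k : ℕ) (hk : 2 ≤ k) :
    ∃ g : (Matrix (Fin n) (Fin n) F)ˣ,
      X + X ^ k = (g : Matrix (Fin n) (Fin n) F) * X *
        ((g⁻¹ : (Matrix (Fin n) (Fin n) F)ˣ) : Matrix (Fin n) (Fin n) F) := by
  classical
  have hk1 : k - 1 ≠ 0 := by omega
  set B := (1 : Matrix (Fin n) (Fin n) F) + X ^ (k - 1) with hB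
  have hnilB : IsNilpotent (X ^ (k - 1)) := hX.pow_of_pos hk1
  have huB : IsUnit B := hnilB.isUnit_one_add
  have hfac : X + X ^ k = X * B := by
    rw [hB, mul_add, mul_one]
    congr 1
    rw [← pow_succ']
    congr 1
    omega
  have hcommXB : Commute X B :=
    (Commute.one_right X).add_right (Commute.pow_right (Commute.refl X) _)
  set f := Matrix.toLin' X with hf
  set f' := Matrix.toLin' (X + X ^ k) with hf'
  have hnf : IsNilpotent f := by
    obtain ⟨m, hm⟩ := hX
    exact ⟨m, by rw [hf, ← toLin'_pow, hm, map_zero]⟩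
  have hnilY : IsNilpotent (X + X ^ k) := by
    rw [hfac]
    exact hcommXB.isNilpotent_mul_right hX
  have hnf' : IsNilpotent f' := by
    obtain ⟨m, hm⟩ := hnilY
    exact ⟨m, by rw [hf', ← toLin'_pow, hm, map_zero]⟩
  have hrank : ∀ r, Module.finrank F (LinearMap.range (f ^ r)) =
      Module.finrank F (LinearMap.range (f' ^ r)) := by
    intro r
    rw [hf, hf', ← toLin'_pow, ← toLin'_pow]
    have hYr : (X + X ^ k) ^ r = X ^ r * B ^ r := by rw [hfac, hcommXB.mul_pow]
    have htop : LinearMap.range (Matrix.toLin' (B ^ r)) = ⊤ := by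
      obtain ⟨u, hu⟩ := huB.pow r
      rw [LinearMap.range_eq_top]
      intro v
      refine ⟨Matrix.toLin' (↑u⁻¹ : Matrix (Fin n) (Fin n) F) v, ?_⟩
      rw [← Matrix.toLin'_mul_apply, ← hu, Units.mul_inv, Matrix.toLin'_one, LinearMap.id_apply]
    rw [hYr, Matrix.toLin'_mul, LinearMap.range_comp_of_range_eq_top _ htop]
  obtain ⟨ψ⟩ := aeval_equiv_of_rank_eq f f' hnf hnf' hrank
  let φ : (Fin n → F) ≃ₗ[F] (Fin n → F) :=
    ((Module.AEval.of F (Fin n → F) f).trans (ψ.restrictScalars F)).trans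
      (Module.AEval.of F (Fin n → F) f').symm
  have hφ : ∀ v, φ (f v) = f' (φ v) := by
    intro v
    show (Module.AEval.of F (Fin n → F) f').symm (ψ (Module.AEval.of F (Fin n → F) f (f v))) =
      f' ((Module.AEval.of F (Fin n → F) f').symm (ψ (Module.AEval.of F (Fin n → F) f v)))
    rw [show Module.AEval.of F (Fin n → F) f (f v) =
        (Polynomial.X : F[X]) • Module.AEval.of F (Fin n → F) f v from
      (Module.AEval.X_smul_of f v).symm, map_smul, Module.AEval.of_symm_X_smul]
    rfl
  have hcomm2 : (φ : (Fin n → F) →ₗ[F] (Fin n → F)) ∘ₗ f =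
      f' ∘ₗ (φ : (Fin n → F) →ₗ[F] (Fin n → F)) := LinearMap.ext hφ
  set P := LinearMap.toMatrix' (φ : (Fin n → F) →ₗ[F] (Fin n → F)) with hP
  set Pinv := LinearMap.toMatrix' (φ.symm : (Fin n → F) →ₗ[F] (Fin n → F)) with hPinv
  have hid1 : (φ : (Fin n → F) →ₗ[F] (Fin n → F)) ∘ₗ
      (φ.symm : (Fin n → F) →ₗ[F] (Fin n → F)) = LinearMap.id := by
    ext v
    simp
  have hid2 : (φ.symm : (Fin n → F) →ₗ[F] (Fin n → F)) ∘ₗ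
      (φ : (Fin n → F) →ₗ[F] (Fin n → F)) = LinearMap.id := by
    ext v
    simp
  have hPQ : P * Pinv = 1 := by
    rw [hP, hPinv, ← LinearMap.toMatrix'_comp, hid1, LinearMap.toMatrix'_id]
  have hQP : Pinv * P = 1 := by
    rw [hP, hPinv, ← LinearMap.toMatrix'_comp, hid2, LinearMap.toMatrix'_id]
  have hmat : P * X = (X + X ^ k) * P := by
    have h5 := congrArg LinearMap.toMatrix' hcomm2
    rw [LinearMap.toMatrix'_comp, LinearMap.toMatrix'_comp, hf, hf',
      LinearMap.toMatrix'_toLin', LinearMap.toMatrix'_toLin'] at h5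
    rw [← hP] at h5
    exact h5
  refine ⟨⟨P, Pinv, hPQ, hQP⟩, ?_⟩
  show X + X ^ k = P * X * Pinv
  calc X + X ^ k = (X + X ^ k) * (P * Pinv) := by rw [hPQ, mul_one]
  _ = ((X + X ^ k) * P) * Pinv := by rw [mul_assoc]
  _ = (P * X) * Pinv := by rw [hmat]
end
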